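/- arXiv:2212.06530 — 7 statements merged into one kernel-verified Lean document; each statement's English description precedes it below -/
import Mathlib

section
/- If S ∈ S_k, then S is bipartite with all its leaves in a single partite class, and this partite class equals the distinguished set X(S). -/
open scoped Classical

/-- `SStar k G VS X` says that the subgraph of `G` induced on the vertex set `VS`,
together with the distinguished vertex set `X ⊆ VS`, is a member of the family
`S_k^*` (defined recursively: `S_1^* = {P_1}` with `X` the single vertex; a member
of `S_{k}^*` for `k ≥ 2` is obtained from disjoint members `S^1 ∈ S_{k-1}^*` and
`S^2 ∈ ∪_{i<k} S_i^*` by joining a new origin vertex `z` to chosen vertices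
`x₁ ∈ X(S^1)` and `x₂ ∈ X(S^2)`, with `X = X(S^1) ∪ X(S^2)`). -/
def SStar {V : Type} : ℕ → SimpleGraph V → Set V → Set V → Prop
  | 0, _, _, _ => False
  | 1, _, VS, X => ∃ x : V, VS = {x} ∧ X = {x}
  | (k+2), G, VS, X => ∃ (z : V) (A B : Set V) (x₁ x₂ : V),
      z ∈ VS ∧ z ∉ X ∧ X ⊆ VS ∧ A ∪ B = VS \ {z} ∧ Disjoint A B ∧
      x₁ ∈ A ∩ X ∧ x₂ ∈ B ∩ X ∧
      (∀ v ∈ VS, G.Adj z v ↔ (v = x₁ ∨ v = x₂)) ∧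
      (∀ a ∈ A, ∀ b ∈ B, ¬ G.Adj a b) ∧
      SStar (k+1) G A (X ∩ A) ∧
      (∃ i, ∃ _ : 1 ≤ i ∧ i ≤ k + 1, SStar i G B (X ∩ B))
termination_by k _ _ _ => k
decreasing_by all_goals omega

/-- The subgraph of `G` induced on `VS` with distinguished set `X` is a member of
the family `S_k = S_k^* \ (S_1 ∪ ⋯ ∪ S_{k-1})`. -/
def SFamilyAt (k : ℕ) {V : Type} (G : SimpleGraph V) (VS X : Set V) : Prop :=
  SStar k G VS X ∧ ∀ i < k, ¬ SStar i G VS X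

/-- The graph `G` itself, with distinguished set `X`, is a member of the family `S_k`. -/
def SFamily (k : ℕ) {V : Type} (G : SimpleGraph V) (X : Set V) : Prop :=
  SFamilyAt k G Set.univ X

/-- `G` contains a substructure from `S_k`: a subgraph (induced on some vertex set
`VS`, with distinguished set `X`) belonging to `S_k` such that every vertex of `X`
has the same degree in the subgraph as in `G`, i.e. all `G`-neighbors of vertices
of `X` lie in `VS`. -/
def HasSubstructure (k : ℕ) {V : Type} (G : SimpleGraph V) : Prop :=
  ∃ VS X : Set V, SFamilyAt k G VS X ∧ ∀ x ∈ X, ∀ w : V, G.Adj x w → w ∈ VS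

/-!
Both properties are inherited through the joining step. The new vertex `z` lies outside `X`
and is adjacent only to `x₁, x₂ ∈ X`, and there are no edges between the two joined parts,
so every edge still crosses between `X` and its complement. Since `x₁ ≠ x₂`, the vertex `z`
has two neighbours, so no vertex outside `X` is ever a leaf.
-/

namespace SStar

variable {V : Type} {G : SimpleGraph V}

@[elab_as_elim]
theorem induction_on {P : Set V → Set V → Prop} {k : ℕ} {VS X : Set V} (h : SStar k G VS X)
    (singleton : ∀ x, P {x} {x})
    (join : ∀ (VS X A B : Set V) (z x₁ x₂ : V), z ∉ X → A ∪ B = VS \ {z} → Disjoint A B →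
      x₁ ∈ A ∩ X → x₂ ∈ B ∩ X → (∀ v ∈ VS, G.Adj z v ↔ (v = x₁ ∨ v = x₂)) →
      (∀ a ∈ A, ∀ b ∈ B, ¬ G.Adj a b) → P A (X ∩ A) → P B (X ∩ B) → P VS X) :
    P VS X := by
  induction k using Nat.strong_induction_on generalizing VS X with
  | _ k ih =>
    match k, h with
    | 0, h =>
      rw [SStar] at h
      exact h.elim
    | 1, h =>
      rw [SStar] at h
      obtain ⟨x, rfl, rfl⟩ := h
      exact singleton x
    | k + 2, h =>
      rw [SStar] at h
      obtain ⟨z, A, B, x₁, x₂, -, hzX, -, hAB, hdisj, hx₁, hx₂, hz, hAB_adj, hA, i, ⟨-, hi⟩, hB⟩ :=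
        h
      exact join VS X A B z x₁ x₂ hzX hAB hdisj hx₁ hx₂ hz hAB_adj
        (ih (k + 1) (by omega) hA) (ih i (by omega) hB)

theorem eq_or_mem_or_mem_of_mem {VS A B : Set V} {z v : V} (hAB : A ∪ B = VS \ {z})
    (hv : v ∈ VS) : v = z ∨ v ∈ A ∨ v ∈ B := by
  by_cases hvz : v = z
  · exact .inl hvz
  · exact .inr (by rw [← Set.mem_union, hAB]; exact ⟨hv, hvz⟩)

theorem mem_iff_notMem_of_adj {k : ℕ} {VS X : Set V} (h : SStar k G VS X) :
    ∀ a ∈ VS, ∀ b ∈ VS, G.Adj a b → (a ∈ X ↔ b ∉ X) := by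
  refine h.induction_on (fun x a ha b hb hab => ?_)
    (fun VS X A B z x₁ x₂ hzX hAB _ hx₁ hx₂ hz hAB_adj ihA ihB => ?_)
  · rw [ha, hb] at hab
    exact absurd hab (G.loopless.irrefl x)
  · have origin : ∀ v ∈ VS, G.Adj z v → (z ∈ X ↔ v ∉ X) := fun v hv hzv => by
      rcases (hz v hv).mp hzv with rfl | rfl <;> simp_all
    intro a ha b hb hab
    rcases eq_or_mem_or_mem_of_mem hAB ha with rfl | haAB
    · exact origin b hb hab
    rcases eq_or_mem_or_mem_of_mem hAB hb with rfl | hbAB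
    · have := origin a ha hab.symm
      tauto
    rcases haAB with haA | haB <;> rcases hbAB with hbA | hbB
    · simpa [haA, hbA] using ihA a haA b hbA hab
    · exact absurd hab (hAB_adj a haA b hbB)
    · exact absurd hab.symm (hAB_adj b hbA a haB)
    · simpa [haB, hbB] using ihB a haB b hbB hab

theorem exists_adj_adj_of_notMem {k : ℕ} {VS X : Set V} (h : SStar k G VS X) :
    ∀ v ∈ VS, v ∉ X → ∃ w₁ w₂, w₁ ≠ w₂ ∧ G.Adj v w₁ ∧ G.Adj v w₂ := by
  refine h.induction_on (fun x v hv hvX => ?_)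
    (fun VS X A B z x₁ x₂ _ hAB hdisj hx₁ hx₂ hz _ ihA ihB => ?_)
  · exact absurd hv hvX
  · intro v hv hvX
    have hAB_sub : A ∪ B ⊆ VS := hAB ▸ Set.sdiff_subset
    rcases eq_or_mem_or_mem_of_mem hAB hv with rfl | hvA | hvB
    · exact ⟨x₁, x₂, hdisj.ne_of_mem hx₁.1 hx₂.1, (hz x₁ (hAB_sub (.inl hx₁.1))).mpr (.inl rfl),
        (hz x₂ (hAB_sub (.inr hx₂.1))).mpr (.inr rfl)⟩
    · exact ihA v hvA fun hv => hvX hv.1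
    · exact ihB v hvB fun hv => hvX hv.1

end SStar

theorem stmt_1_general {V : Type} [Fintype V] (k : ℕ)
    (G : SimpleGraph V) (X : Set V) (h : SFamily k G X) :
    (∀ a b : V, G.Adj a b → (a ∈ X ↔ b ∉ X)) ∧
    (∀ v : V, G.degree v = 1 → v ∈ X) := by
  refine ⟨fun a b => h.1.mem_iff_notMem_of_adj a trivial b trivial, fun v hdeg => ?_⟩
  by_contra hvX
  obtain ⟨w₁, w₂, hne, h₁, h₂⟩ := h.1.exists_adj_adj_of_notMem v trivial hvX
  have : 1 < G.degree v :=
    Finset.one_lt_card.mpr ⟨w₁, by simpa using h₁, w₂, by simpa using h₂, hne⟩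
  omega

/-- If `S ∈ S_k`, then `S` is bipartite with all of its leaves in a single partite
class, and this partite class equals the distinguished set `X(S)`: the edges of
`S` go exactly between `X` and its complement, and every leaf belongs to `X`. -/
theorem stmt_1 {V : Type} [Fintype V] (k : ℕ) (hk : 1 ≤ k)
    (G : SimpleGraph V) (X : Set V) (h : SFamily k G X) :
    (∀ a b : V, G.Adj a b → (a ∈ X ↔ b ∉ X)) ∧
    (∀ v : V, G.degree v = 1 → v ∈ X) :=
  stmt_1_general k G X h
end

section
/- If S ∈ S_k and v is a vertex of S not in X(S), then v has degree exactly 2 in S. In particular, every support vertex of S has degree 2 in S. -/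
open scoped Classical


lemma sstar_two_nbrs : ∀ (k : ℕ) {V : Type} (G : SimpleGraph V) (VS X : Set V),
    SStar k G VS X → ∀ v ∈ VS, v ∉ X →
    ∃ a b, a ≠ b ∧ a ∈ VS ∧ b ∈ VS ∧ ∀ w ∈ VS, (G.Adj v w ↔ w = a ∨ w = b) := by
  intro k
  induction k using Nat.strong_induction_on with
  | _ k ih =>
    rcases k with _ | _ | n
    · intro V G VS X hS; rw [SStar] at hS; exact hS.elim
    · intro V G VS X hS v hv hvX
      rw [SStar] at hS
      obtain ⟨x, hVS, hX⟩ := hS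
      rw [hVS] at hv; rw [hX] at hvX; exact absurd hv hvX
    · intro V G VS X hS v hv hvX
      rw [SStar] at hS
      obtain ⟨z, A, B, x₁, x₂, hzVS, hzX, hXVS, hAB, hdisj, hx₁, hx₂,
        hadjz, hnoadj, hA, i, ⟨hi1, hi2⟩, hB⟩ := hS
      have hAVS : A ⊆ VS := fun a ha => (hAB ▸ Set.mem_union_left B ha : a ∈ VS \ {z}).1
      have hBVS : B ⊆ VS := fun b hb => (hAB ▸ Set.mem_union_right A hb : b ∈ VS \ {z}).1
      have hzA : z ∉ A := fun hz => ((hAB ▸ Set.mem_union_left B hz : z ∈ VS \ {z}).2 rfl)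
      have hzB : z ∉ B := fun hz => ((hAB ▸ Set.mem_union_right A hz : z ∈ VS \ {z}).2 rfl)
      by_cases hvz : v = z
      · subst hvz
        exact ⟨x₁, x₂, fun he => hdisj.ne_of_mem hx₁.1 hx₂.1 he,
          hAVS hx₁.1, hBVS hx₂.1, fun w hw => hadjz w hw⟩
      · have hvAB : v ∈ A ∪ B := by rw [hAB]; exact ⟨hv, hvz⟩
        have hnz : ¬ G.Adj v z := by
          intro hadj
          rcases (hadjz v hv).1 hadj.symm with h1 | h1
          · exact hvX (h1 ▸ hx₁.2)
          · exact hvX (h1 ▸ hx₂.2)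
        rcases hvAB with hvA | hvB
        · obtain ⟨a, b, hab, haA, hbA, hiff⟩ := ih (n+1) (by omega) G A (X ∩ A) hA v hvA
            (fun hc => hvX hc.1)
          refine ⟨a, b, hab, hAVS haA, hAVS hbA, fun w hw => ?_⟩
          by_cases hwz : w = z
          · subst hwz
            constructor
            · intro hadj; exact absurd hadj hnz
            · rintro (rfl | rfl) <;> [exact absurd haA hzA; exact absurd hbA hzA]
          · have hwAB : w ∈ A ∪ B := by rw [hAB]; exact ⟨hw, hwz⟩
            rcases hwAB with hwA | hwB
            · exact hiff w hwA
            · constructor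
              · intro hadj; exact absurd hadj (hnoadj v hvA w hwB)
              · rintro (rfl | rfl) <;>
                  [exact absurd hwB (Set.disjoint_left.mp hdisj haA);
                   exact absurd hwB (Set.disjoint_left.mp hdisj hbA)]
        · obtain ⟨a, b, hab, haB, hbB, hiff⟩ := ih i (by omega) G B (X ∩ B) hB v hvB
            (fun hc => hvX hc.1)
          refine ⟨a, b, hab, hBVS haB, hBVS hbB, fun w hw => ?_⟩
          by_cases hwz : w = z
          · subst hwz
            constructor
            · intro hadj; exact absurd hadj hnz
            · rintro (rfl | rfl) <;> [exact absurd haB hzB; exact absurd hbB hzB]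
          · have hwAB : w ∈ A ∪ B := by rw [hAB]; exact ⟨hw, hwz⟩
            rcases hwAB with hwA | hwB
            · constructor
              · intro hadj; exact absurd hadj.symm (hnoadj w hwA v hvB)
              · rintro (rfl | rfl) <;>
                  [exact absurd hwA (Set.disjoint_right.mp hdisj haB);
                   exact absurd hwA (Set.disjoint_right.mp hdisj hbB)]
            · exact hiff w hwB

lemma sstar_X_indep : ∀ (k : ℕ) {V : Type} (G : SimpleGraph V) (VS X : Set V),
    SStar k G VS X → ∀ x ∈ X, ∀ y ∈ X, ¬ G.Adj x y := by
  intro k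
  induction k using Nat.strong_induction_on with
  | _ k ih =>
    rcases k with _ | _ | n
    · intro V G VS X hS; rw [SStar] at hS; exact hS.elim
    · intro V G VS X hS x hx y hy
      rw [SStar] at hS
      obtain ⟨x₀, hVS, hX⟩ := hS
      rw [hX] at hx hy
      rw [hx, hy]; exact G.irrefl
    · intro V G VS X hS x hx y hy
      rw [SStar] at hS
      obtain ⟨z, A, B, x₁, x₂, hzVS, hzX, hXVS, hAB, hdisj, hx₁, hx₂,
        hadjz, hnoadj, hA, i, ⟨hi1, hi2⟩, hB⟩ := hS
      have hxz : x ≠ z := fun he => hzX (he ▸ hx)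
      have hyz : y ≠ z := fun he => hzX (he ▸ hy)
      have hxAB : x ∈ A ∪ B := by rw [hAB]; exact ⟨hXVS hx, hxz⟩
      have hyAB : y ∈ A ∪ B := by rw [hAB]; exact ⟨hXVS hy, hyz⟩
      rcases hxAB with hxA | hxB <;> rcases hyAB with hyA | hyB
      · exact ih (n+1) (by omega) G A (X ∩ A) hA x ⟨hx, hxA⟩ y ⟨hy, hyA⟩
      · exact hnoadj x hxA y hyB
      · intro hadj; exact hnoadj y hyA x hxB hadj.symm
      · exact ih i (by omega) G B (X ∩ B) hB x ⟨hx, hxB⟩ y ⟨hy, hyB⟩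

/-- If `S ∈ S_k` and `v ∉ X(S)`, then `v` has degree exactly `2` in `S`.
In particular, every support vertex (a vertex adjacent to a leaf) has degree `2`. -/
theorem stmt_2 {V : Type} [Fintype V] (k : ℕ) (hk : 1 ≤ k)
    (G : SimpleGraph V) (X : Set V) (h : SFamily k G X) :
    (∀ v : V, v ∉ X → G.degree v = 2) ∧
    (∀ v : V, (∃ w : V, G.Adj v w ∧ G.degree w = 1) → G.degree v = 2) := by
  obtain ⟨hS, -⟩ := h
  have main : ∀ v : V, v ∉ X → G.degree v = 2 := by
    intro v hvX
    obtain ⟨a, b, hab, -, -, hiff⟩ :=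
      sstar_two_nbrs k G Set.univ X hS v (Set.mem_univ v) hvX
    have : G.neighborFinset v = {a, b} := by
      ext w
      simp [SimpleGraph.mem_neighborFinset, hiff w (Set.mem_univ w)]
    rw [SimpleGraph.degree, this, Finset.card_pair hab]
  refine ⟨main, fun v ⟨w, hadj, hw1⟩ => ?_⟩
  have hwX : w ∈ X := by
    by_contra hwX
    rw [main w hwX] at hw1; omega
  have hvX : v ∉ X := fun hvX =>
    sstar_X_indep k G Set.univ X hS v hvX w hwX hadj
  exact main v hvX
end

section
/- The union S = ∪_{k≥1} S_k equals the class of subdivision graphs of trees: a graph T belongs to S if and only if T = S(G) for some tree G, where S(G) is obtained from G by subdividing each edge exactly once. -/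
open scoped Classical


/-- The subdivision graph `S(G)` of `G`: every edge `uv` is replaced by a path
`u - w_{uv} - v` through a new vertex. -/
def subdivisionGraph {U : Type} (G : SimpleGraph U) :
    SimpleGraph (U ⊕ G.edgeSet) :=
  SimpleGraph.fromRel (fun a b => ∃ (v : U) (e : G.edgeSet),
    a = Sum.inl v ∧ b = Sum.inr e ∧ v ∈ (e : Sym2 U))

/-!
Membership in `S` has an intrinsic characterisation, `SubdividedTreeOn T univ X`. It survives
joining two members through a new vertex; conversely, deleting any vertex outside `X` leaves
exactly the two components of its neighbours, each again of this kind, which recovers the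
recursive construction by induction on the number of vertices. On all of `V` the
characterisation says precisely that `T` subdivides the tree on `X` whose edges join two vertices
with a common neighbour outside `X`.
-/

namespace SimpleGraph

variable {V W : Type*} {T : SimpleGraph V} {S A : Set V} {u v : V}

variable (T) in
/-- Unlike `SimpleGraph.induce`, this keeps the vertex type `V`. -/
def inducedOn (S : Set V) : SimpleGraph V where
  Adj u v := u ∈ S ∧ v ∈ S ∧ T.Adj u v
  symm := ⟨fun _ _ h => ⟨h.2.1, h.1, h.2.2.symm⟩⟩
  loopless := ⟨fun u h => T.loopless.irrefl u h.2.2⟩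

lemma inducedOn_mono {S' : Set V} (h : S ⊆ S') : T.inducedOn S ≤ T.inducedOn S' :=
  fun _ _ huv => ⟨h huv.1, h huv.2.1, huv.2.2⟩

lemma Reachable.of_forall_adj {H : SimpleGraph W} (f : V → W)
    (hf : ∀ u v, T.Adj u v → H.Reachable (f u) (f v)) (h : T.Reachable u v) :
    H.Reachable (f u) (f v) := by
  rw [reachable_iff_reflTransGen] at h
  induction h with
  | refl => rfl
  | tail _ huv ih => exact ih.trans (hf _ _ huv)

lemma Reachable.inducedOn_of_closed (hA : ∀ p q, p ∈ A → q ∈ S → T.Adj p q → q ∈ A)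
    (hu : u ∈ A) (h : (T.inducedOn S).Reachable u v) :
    v ∈ A ∧ (T.inducedOn A).Reachable u v := by
  rw [reachable_iff_reflTransGen] at h
  induction h with
  | refl => exact ⟨hu, .rfl⟩
  | tail _ hpq ih =>
    have hq := hA _ _ ih.1 hpq.2.1 hpq.2.2
    exact ⟨hq, ih.2.trans (Adj.reachable ⟨ih.1, hq, hpq.2.2⟩)⟩

lemma Iso.reachable_inducedOn_image {T' : SimpleGraph W} (e : T ≃g T')
    (h : (T.inducedOn S).Reachable u v) : (T'.inducedOn (e '' S)).Reachable (e u) (e v) :=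
  Reachable.of_forall_adj (T := T.inducedOn S) e (fun _ _ hpq =>
    Adj.reachable ⟨Set.mem_image_of_mem e hpq.1, Set.mem_image_of_mem e hpq.2.1,
      e.map_adj_iff.2 hpq.2.2⟩) h

lemma Iso.reachable_inducedOn_image_iff {T' : SimpleGraph W} (e : T ≃g T') :
    (T'.inducedOn (e '' S)).Reachable (e u) (e v) ↔ (T.inducedOn S).Reachable u v := by
  refine ⟨fun h => ?_, e.reachable_inducedOn_image⟩
  simpa [Set.image_image] using e.symm.reachable_inducedOn_image h

variable (T) in
def componentIn (S : Set V) (a : V) : Set V := {v | v ∈ S ∧ (T.inducedOn S).Reachable a v}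

lemma componentIn_subset {a : V} : T.componentIn S a ⊆ S := fun _ hv => hv.1

lemma self_mem_componentIn {a : V} (ha : a ∈ S) : a ∈ T.componentIn S a := ⟨ha, .rfl⟩

lemma mem_componentIn_of_adj {a p q : V} (hp : p ∈ T.componentIn S a) (hq : q ∈ S)
    (hpq : T.Adj p q) : q ∈ T.componentIn S a :=
  ⟨hq, hp.2.trans (Adj.reachable ⟨hp.1, hq, hpq⟩)⟩

lemma reachable_inducedOn_componentIn {a : V} (hu : u ∈ T.componentIn S a)
    (hv : v ∈ T.componentIn S a) :
    (T.inducedOn (T.componentIn S a)).Reachable u v :=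
  ((hu.2.symm.trans hv.2).inducedOn_of_closed
    (fun _ _ hp hq hpq => mem_componentIn_of_adj hp hq hpq) hu).2

end SimpleGraph

open SimpleGraph

variable {V : Type} {T : SimpleGraph V} {VS X A B : Set V} {z x₁ x₂ : V}

/-- `T` induced on `VS` is the subdivision of a tree on `X`: every vertex outside `X` has exactly
two neighbours, both in `X`, and removing it separates them. -/
structure SubdividedTreeOn (T : SimpleGraph V) (VS X : Set V) : Prop where
  subset : X ⊆ VS
  nonempty : X.Nonempty
  not_adj : ∀ u ∈ X, ∀ v ∈ X, ¬T.Adj u v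
  reachable : ∀ u ∈ VS, ∀ v ∈ VS, (T.inducedOn VS).Reachable u v
  exists_adj_iff : ∀ z ∈ VS, z ∉ X → ∃ a ∈ X, ∃ b ∈ X,
    (∀ w ∈ VS, T.Adj z w ↔ w = a ∨ w = b) ∧ ¬(T.inducedOn (VS \ {z})).Reachable a b

namespace SubdividedTreeOn

variable (h : SubdividedTreeOn T VS X)
include h

lemma mem_of_adj (hz : z ∈ VS) (hzX : z ∉ X) {w : V} (hw : w ∈ VS) (hzw : T.Adj z w) :
    w ∈ X := by
  obtain ⟨a, ha, b, hb, hadj, -⟩ := h.exists_adj_iff z hz hzX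
  rcases (hadj w hw).1 hzw with rfl | rfl
  exacts [ha, hb]

lemma not_reachable_of_adj (hz : z ∈ VS) (hzX : z ∉ X) {a b : V} (ha : a ∈ VS) (hb : b ∈ VS)
    (hza : T.Adj z a) (hzb : T.Adj z b) (hab : a ≠ b) :
    ¬(T.inducedOn (VS \ {z})).Reachable a b := by
  obtain ⟨a', -, b', -, hadj, hr⟩ := h.exists_adj_iff z hz hzX
  rcases (hadj a ha).1 hza with rfl | rfl <;> rcases (hadj b hb).1 hzb with rfl | rfl
  exacts [(hab rfl).elim, hr, fun h' => hr h'.symm, (hab rfl).elim]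

lemma eq_of_adj_of_adj {z' a b : V} (hz : z ∈ VS) (hzX : z ∉ X) (hz' : z' ∈ VS)
    (ha : a ∈ VS) (hb : b ∈ VS) (hab : a ≠ b) (hza : T.Adj z a) (hzb : T.Adj z b)
    (hz'a : T.Adj z' a) (hz'b : T.Adj z' b) : z = z' := by
  by_contra hne
  refine h.not_reachable_of_adj hz hzX ha hb hza hzb hab ?_
  have hz'S : z' ∈ VS \ {z} := ⟨hz', Ne.symm hne⟩
  exact (Adj.reachable (G := T.inducedOn (VS \ {z})) ⟨⟨ha, hza.ne'⟩, hz'S, hz'a.symm⟩).trans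
    (Adj.reachable ⟨hz'S, ⟨hb, hzb.ne'⟩, hz'b⟩)

lemma eq_singleton_of_subset (hVS : VS ⊆ X) : ∃ x, VS = {x} ∧ X = {x} := by
  obtain ⟨x, hx⟩ := h.nonempty
  have hVx : VS = {x} := by
    refine Set.eq_singleton_iff_unique_mem.2 ⟨h.subset hx, fun v hv => ?_⟩
    refine ((h.reachable x (h.subset hx) v hv).inducedOn_of_closed ?_ (Set.mem_singleton x)).1
    rintro p q rfl hq hpq
    exact (h.not_adj p hx q (hVS hq) hpq).elim
  exact ⟨x, hVx, (h.subset.trans hVx.subset).antisymm (hVx ▸ hVS)⟩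

end SubdividedTreeOn

lemma subdividedTreeOn_singleton (x : V) : SubdividedTreeOn T {x} {x} where
  subset := subset_rfl
  nonempty := Set.singleton_nonempty x
  not_adj := by rintro u rfl v rfl; exact T.irrefl
  reachable := by rintro u rfl v rfl; rfl
  exists_adj_iff := by rintro z rfl hz; exact (hz rfl).elim

/-- The shape of a member of `S_k^*`, `k ≥ 2`: the origin `z` joined to `x₁ ∈ A` and `x₂ ∈ B`. -/
structure IsJoin (T : SimpleGraph V) (VS X A B : Set V) (z x₁ x₂ : V) : Prop where
  z_mem : z ∈ VS
  z_not_mem : z ∉ X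
  subset : X ⊆ VS
  union_eq : A ∪ B = VS \ {z}
  disjoint : Disjoint A B
  x₁_mem : x₁ ∈ A ∩ X
  x₂_mem : x₂ ∈ B ∩ X
  adj_iff : ∀ v ∈ VS, T.Adj z v ↔ v = x₁ ∨ v = x₂
  not_adj : ∀ a ∈ A, ∀ b ∈ B, ¬T.Adj a b

lemma sstar_add_two_iff {k : ℕ} :
    SStar (k + 2) T VS X ↔ ∃ z A B x₁ x₂, IsJoin T VS X A B z x₁ x₂ ∧
      SStar (k + 1) T A (X ∩ A) ∧ ∃ i, ∃ _ : 1 ≤ i ∧ i ≤ k + 1, SStar i T B (X ∩ B) := by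
  rw [SStar]
  constructor
  · rintro ⟨z, A, B, x₁, x₂, h₁, h₂, h₃, h₄, h₅, h₆, h₇, h₈, h₉, hA, hB⟩
    exact ⟨z, A, B, x₁, x₂, ⟨h₁, h₂, h₃, h₄, h₅, h₆, h₇, h₈, h₉⟩, hA, hB⟩
  · rintro ⟨z, A, B, x₁, x₂, ⟨h₁, h₂, h₃, h₄, h₅, h₆, h₇, h₈, h₉⟩, hA, hB⟩
    exact ⟨z, A, B, x₁, x₂, h₁, h₂, h₃, h₄, h₅, h₆, h₇, h₈, h₉, hA, hB⟩

lemma SStar.pos {k : ℕ} (h : SStar k T VS X) : 0 < k := by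
  rcases k with _ | k
  · simp [SStar] at h
  · exact k.succ_pos

namespace IsJoin

variable (J : IsJoin T VS X A B z x₁ x₂)
include J

lemma symm : IsJoin T VS X B A z x₂ x₁ where
  z_mem := J.z_mem
  z_not_mem := J.z_not_mem
  subset := J.subset
  union_eq := Set.union_comm B A ▸ J.union_eq
  disjoint := J.disjoint.symm
  x₁_mem := J.x₂_mem
  x₂_mem := J.x₁_mem
  adj_iff v hv := (J.adj_iff v hv).trans or_comm
  not_adj b hb a ha hba := J.not_adj a ha b hb hba.symm

lemma left_subset : A ⊆ VS \ {z} := J.union_eq ▸ Set.subset_union_left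

lemma mem_cases {v : V} (hv : v ∈ VS) : v = z ∨ v ∈ A ∨ v ∈ B := by
  by_cases hvz : v = z
  · exact .inl hvz
  · exact .inr (J.union_eq ▸ ⟨hv, hvz⟩ : v ∈ A ∪ B)

lemma mem_left_of_adj {p q : V} (hp : p ∈ A) (hq : q ∈ VS \ {z}) (hpq : T.Adj p q) : q ∈ A :=
  ((J.union_eq ▸ hq : q ∈ A ∪ B)).resolve_right fun hqB => J.not_adj p hp q hqB hpq

lemma not_reachable_x₁_x₂ : ¬(T.inducedOn (VS \ {z})).Reachable x₁ x₂ := fun hr =>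
  J.disjoint.notMem_of_mem_left
    (hr.inducedOn_of_closed (fun _ _ hp hq hpq => J.mem_left_of_adj hp hq hpq) J.x₁_mem.1).1
    J.x₂_mem.1

lemma eq_x₁_of_adj {p q : V} (hp : p ∈ A) (hq : q ∈ VS) (hqA : q ∉ A) (hpq : T.Adj p q) :
    p = x₁ ∧ q = z := by
  have hqz : q = z := by_contra fun hqz => hqA (J.mem_left_of_adj hp ⟨hq, hqz⟩ hpq)
  subst hqz
  refine ⟨((J.adj_iff p (J.left_subset hp).1).1 hpq.symm).resolve_right ?_, rfl⟩
  rintro rfl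
  exact J.disjoint.notMem_of_mem_left hp J.x₂_mem.1

/-- A path avoiding `z'` between two vertices of `A` can only leave `A` through `x₁` and `z`, so
collapsing everything outside `A` to `x₁` gives a path inside `A`. -/
lemma reachable_left {z' a b : V} (ha : a ∈ A) (hb : b ∈ A)
    (hr : (T.inducedOn (VS \ {z'})).Reachable a b) :
    (T.inducedOn (A \ {z'})).Reachable a b := by
  have key := hr.of_forall_adj (T := T.inducedOn (VS \ {z'})) (H := T.inducedOn (A \ {z'}))
    (fun v => if v ∈ A then v else x₁)
    fun p q ⟨hp, hq, hpq⟩ => by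
      by_cases hpA : p ∈ A <;> by_cases hqA : q ∈ A <;> simp only [hpA, hqA, if_true, if_false]
      · exact Adj.reachable ⟨⟨hpA, hp.2⟩, ⟨hqA, hq.2⟩, hpq⟩
      · rw [(J.eq_x₁_of_adj hpA hq.1 hqA hpq).1]
      · rw [(J.eq_x₁_of_adj hqA hp.1 hpA hpq.symm).1]
      · rfl
  simpa only [ha, hb, if_true] using key

lemma reachable_z_of_left (hA : SubdividedTreeOn T A (X ∩ A)) {u : V} (hu : u ∈ A) :
    (T.inducedOn VS).Reachable u z :=
  ((hA.reachable u hu x₁ J.x₁_mem.1).mono (inducedOn_mono fun _ hv => (J.left_subset hv).1)).trans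
    (Adj.reachable ⟨(J.left_subset J.x₁_mem.1).1, J.z_mem,
      ((J.adj_iff x₁ (J.left_subset J.x₁_mem.1).1).2 (.inl rfl)).symm⟩)

lemma not_adj_of_left (hA : SubdividedTreeOn T A (X ∩ A)) {u v : V} (hu : u ∈ A ∩ X)
    (hv : v ∈ X) : ¬T.Adj u v := by
  rcases J.mem_cases (J.subset hv) with rfl | hvA | hvB
  · exact (J.z_not_mem hv).elim
  · exact hA.not_adj u ⟨hu.2, hu.1⟩ v ⟨hv, hvA⟩
  · exact J.not_adj u hu.1 v hvB

lemma exists_adj_iff_of_left (hA : SubdividedTreeOn T A (X ∩ A)) {z' : V} (hz' : z' ∈ A)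
    (hz'X : z' ∉ X) : ∃ a ∈ X, ∃ b ∈ X,
      (∀ w ∈ VS, T.Adj z' w ↔ w = a ∨ w = b) ∧ ¬(T.inducedOn (VS \ {z'})).Reachable a b := by
  obtain ⟨a, ha, b, hb, hadj, hr⟩ := hA.exists_adj_iff z' hz' fun h => hz'X h.1
  refine ⟨a, ha.1, b, hb.1, fun w hw => ?_, fun h => hr (J.reachable_left ha.2 hb.2 h)⟩
  by_cases hwA : w ∈ A
  · exact hadj w hwA
  refine iff_of_false (fun hz'w => ?_) (by rintro (rfl | rfl); exacts [hwA ha.2, hwA hb.2])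
  exact hz'X ((J.eq_x₁_of_adj hz' hw hwA hz'w).1 ▸ J.x₁_mem.2)

lemma subdividedTreeOn (hA : SubdividedTreeOn T A (X ∩ A)) (hB : SubdividedTreeOn T B (X ∩ B)) :
    SubdividedTreeOn T VS X where
  subset := J.subset
  nonempty := ⟨x₁, J.x₁_mem.2⟩
  not_adj u hu v hv := by
    rcases J.mem_cases (J.subset hu) with rfl | huA | huB
    · exact (J.z_not_mem hu).elim
    · exact J.not_adj_of_left hA ⟨huA, hu⟩ hv
    · exact J.symm.not_adj_of_left hB ⟨huB, hu⟩ hv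
  reachable := by
    have hz : ∀ u ∈ VS, (T.inducedOn VS).Reachable u z := fun u hu => by
      rcases J.mem_cases hu with rfl | huA | huB
      exacts [.rfl, J.reachable_z_of_left hA huA, J.symm.reachable_z_of_left hB huB]
    exact fun u hu v hv => (hz u hu).trans (hz v hv).symm
  exists_adj_iff z' hz' hz'X := by
    rcases J.mem_cases hz' with rfl | hz'A | hz'B
    · exact ⟨x₁, J.x₁_mem.2, x₂, J.x₂_mem.2, J.adj_iff, J.not_reachable_x₁_x₂⟩
    · exact J.exists_adj_iff_of_left hA hz'A hz'X
    · exact J.symm.exists_adj_iff_of_left hB hz'B hz'X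

end IsJoin

theorem SStar.subdividedTreeOn : ∀ {k : ℕ} {VS X : Set V}, SStar k T VS X → SubdividedTreeOn T VS X
  | 0, _, _, h => by simp [SStar] at h
  | 1, _, _, h => by
    rw [SStar] at h
    obtain ⟨x, rfl, rfl⟩ := h
    exact subdividedTreeOn_singleton x
  | k + 2, _, _, h => by
    obtain ⟨z, A, B, x₁, x₂, J, hA, i, ⟨-, hi⟩, hB⟩ := sstar_add_two_iff.1 h
    exact J.subdividedTreeOn hA.subdividedTreeOn hB.subdividedTreeOn
termination_by k => k

lemma IsJoin.sstar {i j : ℕ} (J : IsJoin T VS X A B z x₁ x₂) (hA : SStar i T A (X ∩ A))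
    (hB : SStar j T B (X ∩ B)) : SStar (max i j + 1) T VS X := by
  wlog hji : j ≤ i generalizing A B x₁ x₂ i j
  · rw [max_comm]
    exact this J.symm hB hA (by omega)
  obtain ⟨m, rfl⟩ := Nat.exists_eq_add_one_of_ne_zero hA.pos.ne'
  rw [max_eq_left hji, sstar_add_two_iff]
  exact ⟨z, A, B, x₁, x₂, J, hA, j, ⟨hB.pos, hji⟩, hB⟩

namespace SubdividedTreeOn

variable (h : SubdividedTreeOn T VS X)
include h

lemma subdividedTreeOn_componentIn (hzX : z ∉ X) {a : V} (ha : a ∈ X) :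
    SubdividedTreeOn T (T.componentIn (VS \ {z}) a) (X ∩ T.componentIn (VS \ {z}) a) where
  subset := Set.inter_subset_right
  nonempty := ⟨a, ha, self_mem_componentIn ⟨h.subset ha, fun h' => hzX (h' ▸ ha)⟩⟩
  not_adj u hu v hv := h.not_adj u hu.1 v hv.1
  reachable u hu v hv := reachable_inducedOn_componentIn hu hv
  exists_adj_iff z' hz' hz'X := by
    have hz'V := (componentIn_subset hz').1
    obtain ⟨a', ha', b', hb', hadj, hr⟩ := h.exists_adj_iff z' hz'V fun h' => hz'X ⟨h', hz'⟩
    have hmem : ∀ w ∈ X, T.Adj z' w → w ∈ T.componentIn (VS \ {z}) a := fun w hw hz'w =>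
      mem_componentIn_of_adj hz' ⟨h.subset hw, fun h' => hzX (h' ▸ hw)⟩ hz'w
    refine ⟨a', ⟨ha', hmem a' ha' ((hadj a' (h.subset ha')).2 (.inl rfl))⟩,
      b', ⟨hb', hmem b' hb' ((hadj b' (h.subset hb')).2 (.inr rfl))⟩,
      fun w hw => hadj w (componentIn_subset hw).1, fun hr' => hr (hr'.mono (inducedOn_mono ?_))⟩
    exact Set.sdiff_subset_sdiff_left (componentIn_subset.trans Set.sdiff_subset)

lemma isJoin_componentIn (hz : z ∈ VS) (hzX : z ∉ X) {a b : V} (ha : a ∈ X) (hb : b ∈ X)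
    (hadj : ∀ w ∈ VS, T.Adj z w ↔ w = a ∨ w = b)
    (hab : ¬(T.inducedOn (VS \ {z})).Reachable a b) :
    IsJoin T VS X (T.componentIn (VS \ {z}) a) (T.componentIn (VS \ {z}) b) z a b := by
  set S := VS \ {z}
  have hS : ∀ {c}, c ∈ X → c ∈ S := fun hc => ⟨h.subset hc, fun h' => hzX (h' ▸ hc)⟩
  have hdisj : Disjoint (T.componentIn S a) (T.componentIn S b) :=
    Set.disjoint_left.2 fun v hva hvb => hab (hva.2.trans hvb.2.symm)
  refine ⟨hz, hzX, h.subset, ?_, hdisj, ⟨self_mem_componentIn (hS ha), ha⟩,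
    ⟨self_mem_componentIn (hS hb), hb⟩, hadj, fun p hp q hq hpq =>
      hdisj.notMem_of_mem_left (mem_componentIn_of_adj hp (componentIn_subset hq) hpq) hq⟩
  refine (Set.union_subset componentIn_subset componentIn_subset).antisymm fun v hv => ?_
  -- `VS` is connected and no edge of `VS` leaves `insert z (A ∪ B)`.
  have hclosed : ∀ p q, p ∈ insert z (T.componentIn S a ∪ T.componentIn S b) → q ∈ VS → T.Adj p q →
      q ∈ insert z (T.componentIn S a ∪ T.componentIn S b) := by
    rintro p q (rfl | hpa | hpb) hq hpq
    · rcases (hadj q hq).1 hpq with rfl | rfl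
      exacts [.inr (.inl (self_mem_componentIn (hS ha))),
        .inr (.inr (self_mem_componentIn (hS hb)))]
    all_goals
      by_cases hqz : q = z
      · exact .inl hqz
    · exact .inr (.inl (mem_componentIn_of_adj hpa ⟨hq, hqz⟩ hpq))
    · exact .inr (.inr (mem_componentIn_of_adj hpb ⟨hq, hqz⟩ hpq))
  have := ((h.reachable a (h.subset ha) v hv.1).inducedOn_of_closed hclosed
    (.inr (.inl (self_mem_componentIn (hS ha))))).1
  exact this.resolve_left hv.2

theorem exists_sstar (hVS : VS.Finite) : ∃ k, SStar k T VS X := by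
  induction hn : VS.ncard using Nat.strong_induction_on generalizing VS X with
  | _ n ih =>
  by_cases hVX : VS ⊆ X
  · obtain ⟨x, rfl, rfl⟩ := h.eq_singleton_of_subset hVX
    exact ⟨1, by rw [SStar]; exact ⟨x, rfl, rfl⟩⟩
  obtain ⟨z, hz, hzX⟩ := Set.not_subset.1 hVX
  obtain ⟨a, ha, b, hb, hadj, hab⟩ := h.exists_adj_iff z hz hzX
  have hsub : ∀ c, T.componentIn (VS \ {z}) c ⊂ VS := fun c =>
    componentIn_subset.trans_ssubset (Set.sdiff_singleton_ssubset.2 hz)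
  obtain ⟨i, hA⟩ := ih _ (hn ▸ Set.ncard_lt_ncard (hsub a) hVS)
    (h.subdividedTreeOn_componentIn hzX ha) (hVS.subset (hsub a).subset) rfl
  obtain ⟨j, hB⟩ := ih _ (hn ▸ Set.ncard_lt_ncard (hsub b) hVS)
    (h.subdividedTreeOn_componentIn hzX hb) (hVS.subset (hsub b).subset) rfl
  exact ⟨_, (h.isJoin_componentIn hz hzX ha hb hadj hab).sstar hA hB⟩

end SubdividedTreeOn

section subdivisionGraph

variable {U : Type} {G : SimpleGraph U} {u v : U} {e f : G.edgeSet}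

@[simp]
lemma subdivisionGraph_adj_inl_inr : (subdivisionGraph G).Adj (.inl u) (.inr e) ↔ u ∈ e.1 := by
  simp [subdivisionGraph]

@[simp]
lemma subdivisionGraph_adj_inr_inl : (subdivisionGraph G).Adj (.inr e) (.inl u) ↔ u ∈ e.1 := by
  simp [subdivisionGraph]

@[simp]
lemma not_subdivisionGraph_adj_inl_inl : ¬(subdivisionGraph G).Adj (.inl u) (.inl v) := by
  simp [subdivisionGraph]

@[simp]
lemma not_subdivisionGraph_adj_inr_inr : ¬(subdivisionGraph G).Adj (.inr e) (.inr f) := by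
  simp [subdivisionGraph]

lemma reachable_of_reachable_subdivisionGraph {H : SimpleGraph U} {S : Set (U ⊕ G.edgeSet)}
    (hH : ∀ x y (hxy : G.Adj x y), .inr ⟨s(x, y), hxy⟩ ∈ S → H.Reachable x y)
    (h : ((subdivisionGraph G).inducedOn S).Reachable (.inl u) (.inl v)) : H.Reachable u v := by
  have hend : ∀ (e : G.edgeSet) x, .inr e ∈ S → x ∈ e.1 → H.Reachable x e.1.out.1 := by
    intro e x he hx
    by_cases hxo : x = e.1.out.1
    · rw [← hxo]
    have hxe : e.1 = s(x, e.1.out.1) := (Sym2.mem_and_mem_iff hxo).1 ⟨hx, e.1.out_fst_mem⟩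
    have hxy : G.Adj x e.1.out.1 := by rw [← mem_edgeSet, ← hxe]; exact e.2
    exact hH _ _ hxy (by rwa [show (⟨s(x, _), hxy⟩ : G.edgeSet) = e from Subtype.ext hxe.symm])
  refine h.of_forall_adj (T := (subdivisionGraph G).inducedOn S)
    (Sum.elim id fun e => e.1.out.1) ?_
  rintro (x | e) (y | f) ⟨hp, hq, hpq⟩
  · exact (not_subdivisionGraph_adj_inl_inl hpq).elim
  · exact hend f x hq (subdivisionGraph_adj_inl_inr.1 hpq)
  · exact (hend e y hp (subdivisionGraph_adj_inr_inl.1 hpq)).symm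
  · exact (not_subdivisionGraph_adj_inr_inr hpq).elim

lemma reachable_subdivisionGraph_of_reachable {H : SimpleGraph U} {S : Set (U ⊕ G.edgeSet)}
    (hS : ∀ x, .inl x ∈ S) (hH : ∀ x y, H.Adj x y → ∃ hxy : G.Adj x y, .inr ⟨s(x, y), hxy⟩ ∈ S)
    (h : H.Reachable u v) : ((subdivisionGraph G).inducedOn S).Reachable (.inl u) (.inl v) :=
  h.of_forall_adj (H := (subdivisionGraph G).inducedOn S) Sum.inl fun x y hxy => by
    obtain ⟨_, he⟩ := hH x y hxy
    exact (Adj.reachable (G := (subdivisionGraph G).inducedOn S) ⟨hS x, he, by simp⟩).trans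
      (Adj.reachable ⟨he, hS y, by simp⟩)

lemma isTree_of_subdividedTreeOn (h : SubdividedTreeOn (subdivisionGraph G) .univ (.range .inl)) :
    G.IsTree := by
  obtain ⟨-, u, -⟩ := h.nonempty
  refine ⟨(connected_iff G).2 ⟨fun x y => ?_, ⟨u⟩⟩, isAcyclic_iff_forall_adj_isBridge.2 ?_⟩
  · exact reachable_of_reachable_subdivisionGraph (fun _ _ hxy _ => hxy.reachable)
      (h.reachable _ trivial _ trivial)
  intro x y hxy hr
  refine h.not_reachable_of_adj (z := .inr ⟨s(x, y), hxy⟩) (a := .inl x) (b := .inl y) trivial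
    (by simp) trivial trivial (by simp) (by simp) (by simpa using hxy.ne) ?_
  refine reachable_subdivisionGraph_of_reachable (by simp) (fun a b hab => ?_) hr
  rw [deleteEdges_adj] at hab
  exact ⟨hab.1, trivial, fun h' => hab.2 (congrArg Subtype.val (Sum.inr_injective h'))⟩

lemma SimpleGraph.IsTree.subdividedTreeOn_subdivisionGraph (hG : G.IsTree) :
    SubdividedTreeOn (subdivisionGraph G) .univ (.range .inl) where
  subset := Set.subset_univ _
  nonempty := by obtain ⟨u⟩ := hG.connected.nonempty; exact ⟨.inl u, u, rfl⟩
  not_adj := by rintro _ ⟨x, rfl⟩ _ ⟨y, rfl⟩; simp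
  reachable := by
    have hinl : ∀ p, ∃ x, ((subdivisionGraph G).inducedOn .univ).Reachable (.inl x) p := by
      rintro (x | e)
      · exact ⟨x, .rfl⟩
      · exact ⟨e.1.out.1, Adj.reachable ⟨trivial, trivial, by simpa using e.1.out_fst_mem⟩⟩
    intro p _ q _
    obtain ⟨x, hx⟩ := hinl p
    obtain ⟨y, hy⟩ := hinl q
    refine hx.symm.trans ((reachable_subdivisionGraph_of_reachable (by simp) ?_
      (hG.connected.preconnected x y)).trans hy)
    exact fun a b hab => ⟨hab, trivial⟩
  exists_adj_iff := by
    rintro (x | ⟨e, he⟩) - hz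
    · exact (hz ⟨x, rfl⟩).elim
    induction e using Sym2.ind with | _ a b
    refine ⟨.inl a, ⟨a, rfl⟩, .inl b, ⟨b, rfl⟩, by rintro (w | f) - <;> simp, fun hr => ?_⟩
    refine isBridge_iff.1 (isAcyclic_iff_forall_adj_isBridge.1 hG.isAcyclic he)
      (reachable_of_reachable_subdivisionGraph (fun x y hxy hmem => Adj.reachable ?_) hr)
    exact deleteEdges_adj.2
      ⟨hxy, fun hxyab => hmem.2 (congrArg Sum.inr (Subtype.ext (Set.mem_singleton_iff.1 hxyab)))⟩

end subdivisionGraph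

lemma SubdividedTreeOn.map {W : Type} {T' : SimpleGraph W} (h : SubdividedTreeOn T VS X)
    (e : T ≃g T') : SubdividedTreeOn T' (e '' VS) (e '' X) where
  subset := Set.image_mono h.subset
  nonempty := h.nonempty.image e
  not_adj := by
    rintro _ ⟨u, hu, rfl⟩ _ ⟨v, hv, rfl⟩
    rw [e.map_adj_iff]
    exact h.not_adj u hu v hv
  reachable := by
    rintro _ ⟨u, hu, rfl⟩ _ ⟨v, hv, rfl⟩
    exact e.reachable_inducedOn_image (h.reachable u hu v hv)
  exists_adj_iff := by
    rintro _ ⟨z, hz, rfl⟩ hzX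
    obtain ⟨a, ha, b, hb, hadj, hr⟩ :=
      h.exists_adj_iff z hz fun h' => hzX (Set.mem_image_of_mem e h')
    refine ⟨e a, Set.mem_image_of_mem e ha, e b, Set.mem_image_of_mem e hb, ?_, ?_⟩
    · rintro _ ⟨w, hw, rfl⟩
      rw [e.map_adj_iff, hadj w hw, e.apply_eq_iff_eq, e.apply_eq_iff_eq]
    · rwa [← Set.image_singleton, ← Set.image_sdiff e.injective, e.reachable_inducedOn_image_iff]

/-- The graph whose subdivision `T` is, when `SubdividedTreeOn T univ X`. -/
def branchGraph (T : SimpleGraph V) (X : Set V) : SimpleGraph X where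
  Adj u v := u ≠ v ∧ ∃ z ∉ X, T.Adj z u ∧ T.Adj z v
  symm := ⟨fun _ _ ⟨hne, z, hz, hu, hv⟩ => ⟨hne.symm, z, hz, hv, hu⟩⟩
  loopless := ⟨fun _ h => h.1 rfl⟩

namespace SubdividedTreeOn

variable (h : SubdividedTreeOn T .univ X)
include h

lemma exists_edge (hz : z ∉ X) :
    ∃ e : (branchGraph T X).edgeSet, ∀ x : X, x ∈ e.1 ↔ T.Adj z x := by
  obtain ⟨a, ha, b, hb, hadj, hr⟩ := h.exists_adj_iff z trivial hz
  have hab : (⟨a, ha⟩ : X) ≠ ⟨b, hb⟩ := fun h' => hr (by rw [Subtype.mk.inj h'])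
  refine ⟨⟨s(⟨a, ha⟩, ⟨b, hb⟩), hab, z, hz, (hadj a trivial).2 (.inl rfl),
    (hadj b trivial).2 (.inr rfl)⟩, fun x => ?_⟩
  rw [hadj x trivial]
  simp [Subtype.ext_iff]

noncomputable def toSubdivision (v : V) : X ⊕ (branchGraph T X).edgeSet :=
  if hv : v ∈ X then .inl ⟨v, hv⟩ else .inr (h.exists_edge hv).choose

lemma toSubdivision_of_mem {v : V} (hv : v ∈ X) : h.toSubdivision v = .inl ⟨v, hv⟩ := dif_pos hv

lemma toSubdivision_of_notMem {v : V} (hv : v ∉ X) :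
    ∃ e, h.toSubdivision v = .inr e ∧ ∀ x : X, x ∈ e.1 ↔ T.Adj v x :=
  ⟨_, dif_neg hv, (h.exists_edge hv).choose_spec⟩

lemma toSubdivision_injective : Function.Injective h.toSubdivision := by
  intro p q hpq
  by_cases hp : p ∈ X <;> by_cases hq : q ∈ X
  · simpa [h.toSubdivision_of_mem hp, h.toSubdivision_of_mem hq] using hpq
  · obtain ⟨f, hf, -⟩ := h.toSubdivision_of_notMem hq
    simp [h.toSubdivision_of_mem hp, hf] at hpq
  · obtain ⟨e, he, -⟩ := h.toSubdivision_of_notMem hp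
    simp [h.toSubdivision_of_mem hq, he] at hpq
  obtain ⟨⟨e, hE⟩, he, hpe⟩ := h.toSubdivision_of_notMem hp
  obtain ⟨f, hf, hqf⟩ := h.toSubdivision_of_notMem hq
  obtain rfl : ⟨e, hE⟩ = f := Sum.inr_injective (he.symm.trans (hpq.trans hf))
  induction e using Sym2.ind with | _ x y
  have hxy : (x : V) ≠ y := fun h' => hE.1 (Subtype.ext h')
  exact h.eq_of_adj_of_adj trivial hp trivial trivial trivial hxy ((hpe x).1 (Sym2.mem_mk_left x y))
    ((hpe y).1 (Sym2.mem_mk_right x y)) ((hqf x).1 (Sym2.mem_mk_left x y))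
    ((hqf y).1 (Sym2.mem_mk_right x y))

lemma toSubdivision_surjective : Function.Surjective h.toSubdivision := by
  rintro (x | ⟨e, he⟩)
  · exact ⟨x, h.toSubdivision_of_mem x.2⟩
  induction e using Sym2.ind with | _ x y
  obtain ⟨hxy, z, hz, hzx, hzy⟩ := he
  obtain ⟨f, hf, hzf⟩ := h.toSubdivision_of_notMem hz
  refine ⟨z, hf.trans (congrArg Sum.inr (Subtype.ext ?_))⟩
  exact (Sym2.mem_and_mem_iff hxy).1 ⟨(hzf x).2 hzx, (hzf y).2 hzy⟩

lemma adj_iff_adj_toSubdivision {p q : V} : T.Adj p q ↔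
    (subdivisionGraph (branchGraph T X)).Adj (h.toSubdivision p) (h.toSubdivision q) := by
  by_cases hp : p ∈ X <;> by_cases hq : q ∈ X
  · simpa [h.toSubdivision_of_mem hp, h.toSubdivision_of_mem hq] using h.not_adj p hp q hq
  · obtain ⟨f, hf, hqf⟩ := h.toSubdivision_of_notMem hq
    rw [h.toSubdivision_of_mem hp, hf, subdivisionGraph_adj_inl_inr, hqf, adj_comm]
  · obtain ⟨e, he, hpe⟩ := h.toSubdivision_of_notMem hp
    rw [h.toSubdivision_of_mem hq, he, subdivisionGraph_adj_inr_inl, hpe]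
  · obtain ⟨e, he, -⟩ := h.toSubdivision_of_notMem hp
    obtain ⟨f, hf, -⟩ := h.toSubdivision_of_notMem hq
    rw [he, hf]
    exact iff_of_false (fun hpq => hq (h.mem_of_adj trivial hp trivial hpq))
      not_subdivisionGraph_adj_inr_inr

noncomputable def isoSubdivision : T ≃g subdivisionGraph (branchGraph T X) where
  toEquiv := .ofBijective _ ⟨h.toSubdivision_injective, h.toSubdivision_surjective⟩
  map_rel_iff' := h.adj_iff_adj_toSubdivision.symm

lemma image_isoSubdivision : h.isoSubdivision '' X = .range .inl := by
  ext p
  constructor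
  · rintro ⟨v, hv, rfl⟩
    exact ⟨⟨v, hv⟩, (h.toSubdivision_of_mem hv).symm⟩
  · rintro ⟨x, rfl⟩
    exact ⟨x, x.2, h.toSubdivision_of_mem x.2⟩

end SubdividedTreeOn

/-- The union `S = ∪_{k ≥ 1} S_k` is exactly the class of subdivision graphs of
trees. -/
theorem stmt_4 {V : Type} [Fintype V] (T : SimpleGraph V) :
    (∃ (k : ℕ) (X : Set V), 1 ≤ k ∧ SFamily k T X) ↔
      (∃ (U : Type) (G : SimpleGraph U), G.IsTree ∧
        Nonempty (T ≃g subdivisionGraph G)) := by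
  constructor
  · rintro ⟨k, X, -, hk, -⟩
    have h := hk.subdividedTreeOn
    refine ⟨X, branchGraph T X, isTree_of_subdividedTreeOn ?_, ⟨h.isoSubdivision⟩⟩
    simpa [Set.image_univ_of_surjective h.isoSubdivision.surjective, h.image_isoSubdivision]
      using h.map h.isoSubdivision
  · rintro ⟨U, G, hG, ⟨e⟩⟩
    have h := hG.subdividedTreeOn_subdivisionGraph.map e.symm
    rw [Set.image_univ_of_surjective e.symm.surjective] at h
    have hk : ∃ k, SStar k T .univ _ := h.exists_sstar Set.finite_univ
    exact ⟨Nat.find hk, _, (Nat.find_spec hk).pos, Nat.find_spec hk,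
      fun i hi => Nat.find_min hk hi⟩
end

section
/- Let T be a tree with bipartition classes A_1 and A_2 such that A_1 contains a leaf or an isolated vertex. Then T is the subdivision graph of some tree if and only if every vertex in A_2 has degree exactly 2 in T. -/
open scoped Classical


namespace StmtAux

open SimpleGraph

variable {U V : Type}

lemma subAdj_inl_inl {G : SimpleGraph U} (v w : U) :
    ¬ (subdivisionGraph G).Adj (Sum.inl v) (Sum.inl w) := by
  simp [subdivisionGraph, SimpleGraph.fromRel_adj]

lemma subAdj_inr_inr {G : SimpleGraph U} (e f : G.edgeSet) :
    ¬ (subdivisionGraph G).Adj (Sum.inr e) (Sum.inr f) := by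
  simp [subdivisionGraph, SimpleGraph.fromRel_adj]

lemma subAdj_inl_inr {G : SimpleGraph U} (v : U) (e : G.edgeSet) :
    (subdivisionGraph G).Adj (Sum.inl v) (Sum.inr e) ↔ v ∈ (e : Sym2 U) := by
  simp [subdivisionGraph, SimpleGraph.fromRel_adj]

/-- A walk is determined by its support. -/
lemma walk_eq_of_support_eq {G : SimpleGraph V} :
    ∀ {a b : V} (p q : G.Walk a b), p.support = q.support → p = q := by
  intro a b p
  induction p with
  | nil =>
    intro q h
    cases q with
    | nil => rfl
    | cons h' q' => simp [SimpleGraph.Walk.support_cons] at h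
  | cons h p ih =>
    intro q hq
    cases q with
    | nil => simp [SimpleGraph.Walk.support_cons] at hq
    | cons h' q' =>
      rw [SimpleGraph.Walk.support_cons, SimpleGraph.Walk.support_cons] at hq
      have hq' := (List.cons.injEq _ _ _ _).mp hq |>.2
      have h1s := SimpleGraph.Walk.support_eq_cons p
      have h2s := SimpleGraph.Walk.support_eq_cons q'
      rw [h1s, h2s] at hq'
      obtain ⟨hc, htail⟩ := (List.cons.injEq _ _ _ _).mp hq'
      subst hc
      have := ih q' (by rw [h1s, h2s]; exact congrArg _ htail)
      subst this
      rfl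

/-- Two adjacent vertices in an acyclic graph have at most one common neighbor. -/
lemma uniq {T : SimpleGraph V} (hT : T.IsAcyclic) {a b w w' : V}
    (hab : a ≠ b) (h1 : T.Adj a w) (h2 : T.Adj w b) (h3 : T.Adj a w')
    (h4 : T.Adj w' b) : w = w' := by
  have hp : (SimpleGraph.Walk.cons h1 (SimpleGraph.Walk.cons h2
      SimpleGraph.Walk.nil)).IsPath := by
    simp [SimpleGraph.Walk.isPath_def, h1.ne, h2.ne, hab]
  have hq : (SimpleGraph.Walk.cons h3 (SimpleGraph.Walk.cons h4
      SimpleGraph.Walk.nil)).IsPath := by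
    simp [SimpleGraph.Walk.isPath_def, h3.ne, h4.ne, hab]
  have := hT.path_unique ⟨_, hp⟩ ⟨_, hq⟩
  simpa using congrArg (fun q : T.Path a b => (q : T.Walk a b).support) this

section Lift

variable {G : SimpleGraph U} {T : SimpleGraph V} (g : U → V)
  (m : ∀ {a b : U}, G.Adj a b → V)
  (h1 : ∀ {a b : U} (h : G.Adj a b), T.Adj (g a) (m h))
  (h2 : ∀ {a b : U} (h : G.Adj a b), T.Adj (m h) (g b))

/-- Lift a walk through the subdivision pattern. -/
def liftWalk : ∀ {a b : U}, G.Walk a b → T.Walk (g a) (g b)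
  | _, _, SimpleGraph.Walk.nil => SimpleGraph.Walk.nil
  | _, _, SimpleGraph.Walk.cons h p =>
      SimpleGraph.Walk.cons (h1 h) (SimpleGraph.Walk.cons (h2 h)
        (liftWalk p))

lemma mem_liftWalk_support
    (hsymm : ∀ {a b : U} (h : G.Adj a b), m h.symm = m h) :
    ∀ {a b : U} (p : G.Walk a b) (x : V),
      x ∈ (liftWalk g m h1 h2 p).support ↔
        ((∃ u ∈ p.support, x = g u) ∨
          ∃ (c d : U) (h : G.Adj c d), s(c, d) ∈ p.edges ∧ x = m h) := by
  intro a b p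
  induction p with
  | nil =>
    intro x
    simp [liftWalk]
  | @cons a c b h p ih =>
    intro x
    rw [show liftWalk g m h1 h2 (SimpleGraph.Walk.cons h p) =
      SimpleGraph.Walk.cons (h1 h) (SimpleGraph.Walk.cons (h2 h)
        (liftWalk g m h1 h2 p)) from rfl]
    rw [SimpleGraph.Walk.support_cons, SimpleGraph.Walk.support_cons]
    simp only [List.mem_cons]
    constructor
    · rintro (rfl | rfl | hx)
      · exact Or.inl ⟨a, by simp, rfl⟩
      · exact Or.inr ⟨a, c, h, by simp, rfl⟩
      · rcases (ih x).mp hx with ⟨u, hu, rfl⟩ | ⟨c', d', h', he, rfl⟩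
        · exact Or.inl ⟨u, by simp [hu], rfl⟩
        · exact Or.inr ⟨c', d', h', by simp [he], rfl⟩
    · rintro (⟨u, hu, rfl⟩ | ⟨c', d', h', he, rfl⟩)
      · rw [SimpleGraph.Walk.support_cons, List.mem_cons] at hu
        rcases hu with rfl | hu
        · exact Or.inl rfl
        · exact Or.inr (Or.inr ((ih (g u)).mpr (Or.inl ⟨u, hu, rfl⟩)))
      · rw [SimpleGraph.Walk.edges_cons, List.mem_cons] at he
        rcases he with he | he
        · rw [Sym2.eq_iff] at he
          rcases he with ⟨rfl, rfl⟩ | ⟨rfl, rfl⟩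
          · exact Or.inr (Or.inl rfl)
          · refine Or.inr (Or.inl ?_)
            rw [show h' = h.symm from rfl, hsymm h]
        · exact Or.inr (Or.inr ((ih (m h')).mpr (Or.inr ⟨c', d', h', he, rfl⟩)))

lemma liftWalk_support_filter (Q : V → Prop) [DecidablePred Q]
    (hQg : ∀ u, Q (g u)) (hQm : ∀ {a b : U} (h : G.Adj a b), ¬ Q (m h)) :
    ∀ {a b : U} (p : G.Walk a b),
      (liftWalk g m h1 h2 p).support.filter Q = p.support.map g := by
  intro a b p
  induction p with
  | nil => simp [liftWalk, hQg]
  | @cons a c b h p ih =>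
    rw [show liftWalk g m h1 h2 (SimpleGraph.Walk.cons h p) =
      SimpleGraph.Walk.cons (h1 h) (SimpleGraph.Walk.cons (h2 h)
        (liftWalk g m h1 h2 p)) from rfl]
    rw [SimpleGraph.Walk.support_cons, SimpleGraph.Walk.support_cons,
      SimpleGraph.Walk.support_cons]
    rw [List.filter_cons, List.filter_cons]
    simp [hQg a, hQm h, ih]

lemma liftWalk_isPath (hg : Function.Injective g)
    (hgm : ∀ (u : U) {a b : U} (h : G.Adj a b), g u ≠ m h)
    (hminj : ∀ {a b c d : U} (h : G.Adj a b) (h' : G.Adj c d),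
      m h = m h' → s(a, b) = s(c, d))
    (hsymm : ∀ {a b : U} (h : G.Adj a b), m h.symm = m h) :
    ∀ {a b : U} (p : G.Walk a b), p.IsPath → (liftWalk g m h1 h2 p).IsPath := by
  intro a b p
  induction p with
  | nil => intro _; simp [liftWalk]
  | @cons a c b h p ih =>
    intro hp
    rw [show liftWalk g m h1 h2 (SimpleGraph.Walk.cons h p) =
      SimpleGraph.Walk.cons (h1 h) (SimpleGraph.Walk.cons (h2 h)
        (liftWalk g m h1 h2 p)) from rfl]
    have hp' : p.IsPath := hp.of_cons
    have hanotin : a ∉ p.support :=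
      ((SimpleGraph.Walk.cons_isPath_iff h p).mp hp).2
    have hedge : s(a, c) ∉ p.edges := by
      have := hp.isTrail.edges_nodup
      rw [SimpleGraph.Walk.edges_cons] at this
      exact (List.nodup_cons.mp this).1
    refine SimpleGraph.Walk.IsPath.cons (SimpleGraph.Walk.IsPath.cons
      (ih hp') ?_) ?_
    · -- m h ∉ support of lift p
      intro hmem
      rcases (mem_liftWalk_support g m h1 h2 hsymm p (m h)).mp hmem with
        ⟨u, _, hu⟩ | ⟨c', d', h', he, hmh⟩
      · exact hgm u h hu.symm
      · have := hminj h h' hmh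
        rw [this] at hedge
        exact hedge he
    · -- g a ∉ support of cons (h2 h) (lift p)
      rw [SimpleGraph.Walk.support_cons, List.mem_cons]
      rintro (hga | hmem)
      · exact hgm a h hga
      · rcases (mem_liftWalk_support g m h1 h2 hsymm p (g a)).mp hmem with
          ⟨u, hu, hgu⟩ | ⟨c', d', h', _, hmh⟩
        · exact hanotin (hg hgu ▸ hu)
        · exact hgm a h' hmh
end Lift

end StmtAux

/-- A tree `T` with bipartition classes `A₁`, `A₂` such that `A₁` contains a leaf
or an isolated vertex is the subdivision graph of some tree if and only if every
vertex of `A₂` has degree exactly `2` in `T`. -/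
theorem stmt_5 {V : Type} [Fintype V] (T : SimpleGraph V) (hT : T.IsTree)
    (A₁ A₂ : Set V) (hunion : A₁ ∪ A₂ = Set.univ) (hdisj : Disjoint A₁ A₂)
    (hcross : ∀ a b : V, T.Adj a b → ((a ∈ A₁ ∧ b ∈ A₂) ∨ (a ∈ A₂ ∧ b ∈ A₁)))
    (hleaf : ∃ v ∈ A₁, T.degree v ≤ 1) :
    (∃ (U : Type) (G : SimpleGraph U), G.IsTree ∧
        Nonempty (T ≃g subdivisionGraph G)) ↔
      (∀ v ∈ A₂, T.degree v = 2) := by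
  classical
  have hA2 : ∀ v, v ∉ A₁ → v ∈ A₂ := by
    intro v hv
    have hv' : v ∈ A₁ ∪ A₂ := by rw [hunion]; trivial
    exact ((Set.mem_union _ _ _).mp hv').resolve_left hv
  have hnot1 : ∀ v, v ∈ A₁ → v ∉ A₂ := fun v hv => Set.disjoint_left.mp hdisj hv
  have hnot2 : ∀ v, v ∈ A₂ → v ∉ A₁ := fun v hv => Set.disjoint_right.mp hdisj hv
  constructor
  · rintro ⟨U, G, hGtree, ⟨φ⟩⟩
    haveI : Fintype (U ⊕ G.edgeSet) := Fintype.ofEquiv V φ.toEquiv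
    have hdeg_eq : ∀ x : V, T.degree x = (subdivisionGraph G).degree (φ x) := by
      intro x
      rw [← SimpleGraph.card_neighborSet_eq_degree,
        ← SimpleGraph.card_neighborSet_eq_degree]
      exact Fintype.card_congr (φ.mapNeighborSet x)
    have hdeg_inr : ∀ e : G.edgeSet,
        (subdivisionGraph G).degree (Sum.inr e) = 2 := by
      intro e
      obtain ⟨e, he⟩ := e
      revert he
      induction e using Sym2.ind with
      | _ a b =>
        intro he
        have hab : G.Adj a b := G.mem_edgeSet.mp he
        have hne : (Sum.inl a : U ⊕ G.edgeSet) ≠ Sum.inl b := by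
          simp [hab.ne]
        rw [← SimpleGraph.card_neighborFinset_eq_degree]
        have hnbr : (subdivisionGraph G).neighborFinset (Sum.inr ⟨s(a, b), he⟩) =
            {Sum.inl a, Sum.inl b} := by
          ext z
          rw [SimpleGraph.mem_neighborFinset]
          cases z with
          | inl v =>
            rw [(subdivisionGraph G).adj_comm, StmtAux.subAdj_inl_inr]
            simp [Sym2.mem_iff]
          | inr f => simp [StmtAux.subAdj_inr_inr]
        rw [hnbr, Finset.card_pair hne]
    have cross' : ∀ {s t : U ⊕ G.edgeSet}, (subdivisionGraph G).Adj s t →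
        ((∃ u, s = Sum.inl u) ↔ ¬ ∃ u, t = Sum.inl u) := by
      rintro (u | e) (u' | e') hadj
      · exact absurd hadj (StmtAux.subAdj_inl_inl _ _)
      · simp
      · simp
      · exact absurd hadj (StmtAux.subAdj_inr_inr _ _)
    have hstep1 : ∀ x z : V, T.Adj x z → (x ∈ A₁ ↔ z ∉ A₁) := by
      intro x z hxz
      rcases hcross x z hxz with ⟨hx, hz⟩ | ⟨hx, hz⟩
      · exact iff_of_true hx (hnot2 z hz)
      · exact iff_of_false (hnot2 x hx) (fun h => h hz)
    have alt : ∀ {x y : V} (p : T.Walk x y),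
        (x ∈ A₁ ↔ ∃ u, φ x = Sum.inl u) → (y ∈ A₁ ↔ ∃ u, φ y = Sum.inl u) := by
      intro x y p
      induction p with
      | nil => exact id
      | @cons x z y h p ih =>
        intro hx
        apply ih
        have e1 := hstep1 x z h
        have e2 := cross' (φ.map_rel_iff.mpr h)
        constructor
        · intro hz
          by_contra hc
          exact (e1.mp (hx.mpr (e2.mpr hc))) hz
        · intro hu
          by_contra hz
          exact e2.mp (hx.mp (e1.mpr hz)) hu
    obtain ⟨a, ha1, hadeg⟩ := hleaf
    have hbase : a ∈ A₁ ↔ ∃ u, φ a = Sum.inl u := by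
      refine iff_of_true ha1 ?_
      rcases hφa : φ a with u | e
      · exact ⟨u, rfl⟩
      · exfalso
        have hh := hdeg_eq a
        rw [hφa, hdeg_inr e] at hh
        omega
    intro v hv
    obtain ⟨p⟩ := hT.1.preconnected a v
    have hv' := alt p hbase
    rcases hφv : φ v with u | e
    · exact absurd (hv'.mpr ⟨u, hφv⟩) (hnot2 v hv)
    · rw [hdeg_eq v, hφv, hdeg_inr e]
  · intro hdeg
    obtain ⟨v₀, hv₀, _⟩ := hleaf
    have hnb : ∀ v, v ∈ A₂ →
        ∃ a b : ↥A₁, a ≠ b ∧ T.neighborFinset v = {↑a, ↑b} := by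
      intro v hv
      have hc : (T.neighborFinset v).card = 2 := by
        rw [SimpleGraph.card_neighborFinset_eq_degree]; exact hdeg v hv
      obtain ⟨a, b, hab, hset⟩ := Finset.card_eq_two.mp hc
      have haadj : T.Adj v a := by
        rw [← SimpleGraph.mem_neighborFinset, hset]; simp
      have hbadj : T.Adj v b := by
        rw [← SimpleGraph.mem_neighborFinset, hset]; simp
      have ha1 : a ∈ A₁ := by
        rcases hcross v a haadj with ⟨h1, _⟩ | ⟨_, h2⟩
        · exact absurd h1 (hnot2 v hv)
        · exact h2
      have hb1 : b ∈ A₁ := by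
        rcases hcross v b hbadj with ⟨h1, _⟩ | ⟨_, h2⟩
        · exact absurd h1 (hnot2 v hv)
        · exact h2
      exact ⟨⟨a, ha1⟩, ⟨b, hb1⟩, fun h => hab (congrArg Subtype.val h), hset⟩
    choose n₁ n₂ hne hset using hnb
    have hmem : ∀ v (h : v ∈ A₂) (x : V),
        T.Adj v x ↔ (x = ↑(n₁ v h) ∨ x = ↑(n₂ v h)) := by
      intro v h x
      rw [← SimpleGraph.mem_neighborFinset, hset v h]
      simp
    set G : SimpleGraph ↥A₁ := SimpleGraph.fromRel
      (fun a b => ∃ w ∈ A₂, T.Adj ↑a w ∧ T.Adj ↑b w) with hGdef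
    have hGadj : ∀ a b : ↥A₁, G.Adj a b ↔
        (a ≠ b ∧ ∃ w ∈ A₂, T.Adj ↑a w ∧ T.Adj ↑b w) := by
      intro a b
      rw [hGdef, SimpleGraph.fromRel_adj]
      constructor
      · rintro ⟨hne', ⟨w, hw, hx, hy⟩ | ⟨w, hw, hx, hy⟩⟩
        · exact ⟨hne', w, hw, hx, hy⟩
        · exact ⟨hne', w, hw, hy, hx⟩
      · rintro ⟨hne', w, hw, hx, hy⟩
        exact ⟨hne', Or.inl ⟨w, hw, hx, hy⟩⟩
    have hedge : ∀ v (h : v ∈ A₂), G.Adj (n₁ v h) (n₂ v h) := by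
      intro v h
      exact (hGadj _ _).mpr ⟨hne v h, v, h,
        ((hmem v h _).mpr (Or.inl rfl)).symm, ((hmem v h _).mpr (Or.inr rfl)).symm⟩
    have pair : ∀ {α : Type} (x y p q : α), x ≠ y → (x = p ∨ x = q) →
        (y = p ∨ y = q) → s(x, y) = s(p, q) := by
      rintro α x y p q hxy (rfl | rfl) (rfl | rfl)
      · exact absurd rfl hxy
      · rfl
      · exact Sym2.eq_swap
      · exact absurd rfl hxy
    let f : V → ↥A₁ ⊕ G.edgeSet := fun v =>
      if h : v ∈ A₁ then Sum.inl ⟨v, h⟩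
      else Sum.inr ⟨s(n₁ v (hA2 v h), n₂ v (hA2 v h)),
        (G.mem_edgeSet).mpr (hedge v (hA2 v h))⟩
    have hf1 : ∀ v (h : v ∈ A₁), f v = Sum.inl ⟨v, h⟩ := fun v h => dif_pos h
    have hf2 : ∀ v (h : v ∉ A₁), f v =
        Sum.inr ⟨s(n₁ v (hA2 v h), n₂ v (hA2 v h)),
          (G.mem_edgeSet).mpr (hedge v (hA2 v h))⟩ := fun v h => dif_neg h
    have hinj2 : ∀ x y (hx : x ∈ A₂) (hy : y ∈ A₂),
        s(n₁ x hx, n₂ x hx) = s(n₁ y hy, n₂ y hy) → x = y := by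
      intro x y hx hy h
      have hV : s((n₁ x hx : V), (n₂ x hx : V)) =
          s((n₁ y hy : V), (n₂ y hy : V)) := by
        have := congrArg (Sym2.map (Subtype.val)) h
        simpa using this
      have h1 : T.Adj x ↑(n₁ x hx) := (hmem x hx _).mpr (Or.inl rfl)
      have h2 : T.Adj x ↑(n₂ x hx) := (hmem x hx _).mpr (Or.inr rfl)
      have hm1 : ((n₁ x hx : V) = ↑(n₁ y hy) ∨ (n₁ x hx : V) = ↑(n₂ y hy)) := by
        have hin : (n₁ x hx : V) ∈ s((n₁ y hy : V), (n₂ y hy : V)) := by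
          rw [← hV]; simp
        simpa using hin
      have hm2 : ((n₂ x hx : V) = ↑(n₁ y hy) ∨ (n₂ x hx : V) = ↑(n₂ y hy)) := by
        have hin : (n₂ x hx : V) ∈ s((n₁ y hy : V), (n₂ y hy : V)) := by
          rw [← hV]; simp
        simpa using hin
      have h3 : T.Adj y ↑(n₁ x hx) := (hmem y hy _).mpr hm1
      have h4 : T.Adj y ↑(n₂ x hx) := (hmem y hy _).mpr hm2
      have hcne : (n₁ x hx : V) ≠ ↑(n₂ x hx) :=
        fun hh => hne x hx (Subtype.ext hh)
      exact StmtAux.uniq hT.2 hcne h1.symm h2 h3.symm h4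
    have hinj : Function.Injective f := by
      intro x y hxy
      by_cases hx : x ∈ A₁ <;> by_cases hy : y ∈ A₁
      · rw [hf1 x hx, hf1 y hy] at hxy
        simpa using hxy
      · rw [hf1 x hx, hf2 y hy] at hxy; simp at hxy
      · rw [hf2 x hx, hf1 y hy] at hxy; simp at hxy
      · rw [hf2 x hx, hf2 y hy] at hxy
        simp only [Sum.inr.injEq, Subtype.mk.injEq] at hxy
        exact hinj2 x y (hA2 x hx) (hA2 y hy) hxy
    have hsurj : Function.Surjective f := by
      rintro (⟨a, ha⟩ | ⟨e, he⟩)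
      · exact ⟨a, hf1 a ha⟩
      · revert he
        induction e using Sym2.ind with
        | _ a b =>
          intro he
          obtain ⟨hab, w, hw, h1, h2⟩ := (hGadj a b).mp (G.mem_edgeSet.mp he)
          have hw1 : w ∉ A₁ := hnot2 w hw
          refine ⟨w, ?_⟩
          rw [hf2 w hw1]
          refine congrArg Sum.inr (Subtype.ext ?_)
          have hma : a = n₁ w (hA2 w hw1) ∨ a = n₂ w (hA2 w hw1) := by
            rcases (hmem w (hA2 w hw1) ↑a).mp h1.symm with h | h
            · exact Or.inl (Subtype.ext h)
            · exact Or.inr (Subtype.ext h)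
          have hmb : b = n₁ w (hA2 w hw1) ∨ b = n₂ w (hA2 w hw1) := by
            rcases (hmem w (hA2 w hw1) ↑b).mp h2.symm with h | h
            · exact Or.inl (Subtype.ext h)
            · exact Or.inr (Subtype.ext h)
          exact (pair a b _ _ hab hma hmb).symm
    have key_adj : ∀ x y : V, (subdivisionGraph G).Adj (f x) (f y) ↔ T.Adj x y := by
      intro x y
      by_cases hx : x ∈ A₁ <;> by_cases hy : y ∈ A₁
      · rw [hf1 x hx, hf1 y hy]
        refine iff_of_false (StmtAux.subAdj_inl_inl _ _) (fun ha => ?_)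
        rcases hcross x y ha with ⟨_, h2⟩ | ⟨h2, _⟩
        · exact hnot2 y h2 hy
        · exact hnot2 x h2 hx
      · rw [hf1 x hx, hf2 y hy, StmtAux.subAdj_inl_inr, T.adj_comm x y,
          hmem y (hA2 y hy) x]
        simp [Sym2.mem_iff, Subtype.ext_iff]
      · rw [hf2 x hx, hf1 y hy, (subdivisionGraph G).adj_comm,
          StmtAux.subAdj_inl_inr, hmem x (hA2 x hx) y]
        simp [Sym2.mem_iff, Subtype.ext_iff]
      · rw [hf2 x hx, hf2 y hy]
        refine iff_of_false (StmtAux.subAdj_inr_inr _ _) (fun ha => ?_)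
        rcases hcross x y ha with ⟨h2, _⟩ | ⟨_, h2⟩
        · exact hx h2
        · exact hy h2
    have key : ∀ {x y : V} (p : T.Walk x y) (u v : ↥A₁),
        (x = ↑u ∨ (x ∈ A₂ ∧ T.Adj x ↑u)) → (y = ↑v ∨ (y ∈ A₂ ∧ T.Adj y ↑v)) →
        G.Reachable u v := by
      intro x y p
      induction p with
      | nil =>
        rintro u v (h1 | ⟨hx2, hxu⟩) (h2 | ⟨hy2, hyv⟩)
        · exact (Subtype.ext (h1.symm.trans h2) : u = v) ▸
            SimpleGraph.Reachable.refl u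
        · exact absurd (h1 ▸ hy2) (hnot1 _ u.2)
        · exact absurd (h2 ▸ hx2) (hnot1 _ v.2)
        · by_cases he : u = v
          · exact he ▸ SimpleGraph.Reachable.refl u
          · exact ((hGadj u v).mpr ⟨he, _, hx2, hxu.symm, hyv.symm⟩).reachable
      | @cons x z y h p ih =>
        rintro u v hu hv
        rcases hcross x z h with ⟨hx1, hz2⟩ | ⟨hx2, hz1⟩
        · rcases hu with h1 | ⟨hx2, _⟩
          · exact ih u v (Or.inr ⟨hz2, h1 ▸ h.symm⟩) hv
          · exact absurd hx2 (hnot1 x hx1)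
        · have step : G.Reachable u ⟨z, hz1⟩ := by
            rcases hu with h1 | ⟨_, hxu⟩
            · exact absurd (h1 ▸ hx2) (hnot1 _ u.2)
            · by_cases he : u = (⟨z, hz1⟩ : ↥A₁)
              · exact he ▸ SimpleGraph.Reachable.refl u
              · exact ((hGadj u ⟨z, hz1⟩).mpr
                  ⟨he, x, hx2, hxu.symm, h.symm⟩).reachable
          exact step.trans (ih ⟨z, hz1⟩ v (Or.inl rfl) hv)
    have hconn : G.Connected := by
      haveI : Nonempty ↥A₁ := ⟨⟨v₀, hv₀⟩⟩
      refine ⟨fun u v => ?_⟩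
      obtain ⟨p⟩ := hT.1.preconnected ↑u ↑v
      exact key p u v (Or.inl rfl) (Or.inl rfl)
    have hacyc : G.IsAcyclic := by
      apply SimpleGraph.isAcyclic_of_path_unique
      intro c d p q
      let m : ∀ {a b : ↥A₁}, G.Adj a b → V :=
        fun {a b} h => ((hGadj a b).mp h).2.choose
      have hm : ∀ {a b : ↥A₁} (h : G.Adj a b),
          m h ∈ A₂ ∧ T.Adj ↑a (m h) ∧ T.Adj ↑b (m h) :=
        fun {a b} h => ((hGadj a b).mp h).2.choose_spec
      have hne' : ∀ {a b : ↥A₁}, G.Adj a b → (a : V) ≠ ↑b :=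
        fun h hh => ((hGadj _ _).mp h).1 (Subtype.ext hh)
      have h1' : ∀ {a b : ↥A₁} (h : G.Adj a b), T.Adj ↑a (m h) :=
        fun h => (hm h).2.1
      have h2' : ∀ {a b : ↥A₁} (h : G.Adj a b), T.Adj (m h) ↑b :=
        fun h => (hm h).2.2.symm
      have hsymm : ∀ {a b : ↥A₁} (h : G.Adj a b), m h.symm = m h := by
        intro a b h
        exact StmtAux.uniq hT.2 (hne' h) (hm h.symm).2.2
          (hm h.symm).2.1.symm (h1' h) (h2' h)
      have hminj : ∀ {a b c d : ↥A₁} (h : G.Adj a b) (h' : G.Adj c d),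
          m h = m h' → s(a, b) = s(c, d) := by
        intro a b c d h h' hmm
        have hw2 : m h ∈ A₂ := (hm h).1
        have hma : (a : V) = ↑(n₁ (m h) hw2) ∨ (a : V) = ↑(n₂ (m h) hw2) :=
          (hmem _ hw2 _).mp (h1' h).symm
        have hmb : (b : V) = ↑(n₁ (m h) hw2) ∨ (b : V) = ↑(n₂ (m h) hw2) :=
          (hmem _ hw2 _).mp ((hm h).2.2).symm
        have hmc : (c : V) = ↑(n₁ (m h) hw2) ∨ (c : V) = ↑(n₂ (m h) hw2) :=
          (hmem _ hw2 _).mp (show T.Adj (m h) ↑c by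
            rw [hmm]; exact (h1' h').symm)
        have hmd : (d : V) = ↑(n₁ (m h) hw2) ∨ (d : V) = ↑(n₂ (m h) hw2) :=
          (hmem _ hw2 _).mp (show T.Adj (m h) ↑d by
            rw [hmm]; exact ((hm h').2.2).symm)
        have e1 := pair (a : V) ↑b _ _ (hne' h) hma hmb
        have e2 := pair (c : V) ↑d _ _ (hne' h') hmc hmd
        have e3 : s((a : V), ↑b) = s((c : V), ↑d) := e1.trans e2.symm
        rw [Sym2.eq_iff] at e3 ⊢
        rcases e3 with ⟨hh1, hh2⟩ | ⟨hh1, hh2⟩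
        · exact Or.inl ⟨Subtype.ext hh1, Subtype.ext hh2⟩
        · exact Or.inr ⟨Subtype.ext hh1, Subtype.ext hh2⟩
      have hgm : ∀ (u : ↥A₁) {a b : ↥A₁} (h : G.Adj a b), (u : V) ≠ m h :=
        fun u {a b} h hh => hnot1 _ u.2 (by rw [hh]; exact (hm h).1)
      have hliftp := StmtAux.liftWalk_isPath (Subtype.val) m h1' h2'
        Subtype.val_injective hgm hminj hsymm p.1 p.2
      have hliftq := StmtAux.liftWalk_isPath (Subtype.val) m h1' h2'
        Subtype.val_injective hgm hminj hsymm q.1 q.2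
      have heq := hT.2.path_unique ⟨_, hliftp⟩ ⟨_, hliftq⟩
      have heqw : StmtAux.liftWalk Subtype.val m h1' h2' p.1 =
          StmtAux.liftWalk Subtype.val m h1' h2' q.1 :=
        congrArg Subtype.val heq
      have hfil1 := StmtAux.liftWalk_support_filter Subtype.val m h1' h2'
        (· ∈ A₁) (fun u => u.2) (fun {a b} h => hnot2 _ (hm h).1) p.1
      have hfil2 := StmtAux.liftWalk_support_filter Subtype.val m h1' h2'
        (· ∈ A₁) (fun u => u.2) (fun {a b} h => hnot2 _ (hm h).1) q.1
      have hsupp : p.1.support.map Subtype.val = q.1.support.map Subtype.val := by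
        rw [← hfil1, ← hfil2, heqw]
      have hs : p.1.support = q.1.support :=
        List.map_injective_iff.mpr Subtype.val_injective hsupp
      exact Subtype.ext (StmtAux.walk_eq_of_support_eq p.1 q.1 hs)
    exact ⟨↥A₁, G, ⟨hconn, hacyc⟩,
      ⟨{ toEquiv := Equiv.ofBijective f ⟨hinj, hsurj⟩,
         map_rel_iff' := fun {x y} => key_adj x y }⟩⟩
end

section
/- Let T be a tree that does not admit a perfect matching, and suppose in the Staller-start Maker-Breaker domination game on T Staller wins but needs at least 2 moves (i.e., 2 ≤ γ'_SMB(T) < ∞). If s_1 is an optimal first move of Staller, then there exists an optimal response d_1' of Dominator with d_1' adjacent to s_1 in T. -/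
open scoped Classical

open scoped Classical

noncomputable section

/-- Minimax value of the Maker–Breaker game on hypergraph with edge set `E`:
`mbVal E t M B` is the minimum number of further moves Maker needs to claim all
vertices of some hyperedge (Maker has claimed `M`, Breaker has claimed `B`,
`t = true` iff Maker moves next), under optimal play; `⊤` if Maker cannot win. -/
def mbVal {V : Type} [Fintype V] (E : Set (Finset V)) :
    Bool → Finset V → Finset V → ℕ∞
  | true, M, B =>
      if ∃ e ∈ E, e ⊆ M then 0
      else ⨅ v ∈ Finset.univ \ (M ∪ B), (1 + mbVal E false (insert v M) B)
  | false, M, B =>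
      if ∃ e ∈ E, e ⊆ M then 0
      else if Finset.univ \ (M ∪ B) = ∅ then ⊤
      else ⨆ v ∈ Finset.univ \ (M ∪ B), mbVal E true M (insert v B)
termination_by _t M B => (Finset.univ \ (M ∪ B)).card
decreasing_by
  all_goals
    apply Finset.card_lt_card
    rw [Finset.ssubset_iff_of_subset]
    · refine ⟨v, ‹_›, by simp⟩
    · intro x hx
      simp only [Finset.mem_sdiff, Finset.mem_univ, true_and, Finset.mem_union,
        Finset.mem_insert] at hx ⊢
      tauto

/-- The closed neighborhood of `v` as a finset. -/
def closedNbhdFinset {V : Type} [Fintype V] (G : SimpleGraph V) (v : V) : Finset V :=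
  Finset.univ.filter (fun w => w = v ∨ G.Adj v w)

/-- The closed neighborhood hypergraph of a graph. -/
def nbhdHyp {V : Type} [Fintype V] (G : SimpleGraph V) : Set (Finset V) :=
  Set.range (closedNbhdFinset G)

/-- `γ'_SMB(G)`: the number of moves Staller (= Maker on the closed neighborhood
hypergraph, moving first) needs to win the Maker–Breaker domination game on `G`. -/
def gammaSMB' {V : Type} [Fintype V] (G : SimpleGraph V) : ℕ∞ :=
  mbVal (nbhdHyp G) true ∅ ∅

end

/-!
Let `d` be an optimal reply of Dominator to `s₁` and let `p` be the neighbour of `s₁` on the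
`s₁`–`d` path of the tree. Once Dominator holds `p`, every closed neighbourhood Staller can still
claim lies either inside the component `A` of `T - p` containing `s₁` or outside `A`, and these two
games do not interact: Dominator simply answers in the part where Staller has just played. Inside
`A` the stone on `p` is as good as one on `d ∉ A`; outside `A` the stone on `s₁` is useless, so
there Staller needs at least `γ'_SMB(T)` moves. Either way the reply `p` costs Staller at least
as much as the optimal reply `d`, so `p` is optimal as well.
-/
namespace MakerBreaker

variable {V : Type} {E E' : Set (Finset V)} {M B : Finset V}

def Wins (E : Set (Finset V)) (M : Finset V) : Prop := ∃ e ∈ E, e ⊆ M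

theorem Wins.mono {M' : Finset V} (h : Wins E M) (hM : M ⊆ M') : Wins E M' :=
  let ⟨e, he, heM⟩ := h
  ⟨e, he, heM.trans hM⟩

theorem wins_union {E₁ E₂ : Set (Finset V)} : Wins (E₁ ∪ E₂) M ↔ Wins E₁ M ∨ Wins E₂ M := by
  simp only [Wins, Set.mem_union, or_and_right, exists_or]

theorem wins_insert_iff_of_forall_not_mem {x : V} (hx : ∀ e ∈ E, x ∉ e) :
    Wins E (insert x M) ↔ Wins E M := by
  refine ⟨fun ⟨e, he, heM⟩ => ⟨e, he, fun y hy => ?_⟩, fun h => h.mono (Finset.subset_insert x M)⟩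
  exact (Finset.mem_insert.mp (heM hy)).resolve_left fun hyx => hx e he (hyx ▸ hy)

variable [Fintype V]

noncomputable def unclaimed (M B : Finset V) : Finset V := Finset.univ \ (M ∪ B)

@[simp]
theorem mem_unclaimed {v : V} : v ∈ unclaimed M B ↔ v ∉ M ∧ v ∉ B := by
  simp [unclaimed]

theorem unclaimed_insert_left (v : V) : unclaimed (insert v M) B = (unclaimed M B).erase v := by
  ext; simp; tauto

theorem unclaimed_insert_right (v : V) : unclaimed M (insert v B) = (unclaimed M B).erase v := by
  ext; simp; tauto

theorem mbVal_of_wins (t : Bool) (h : Wins E M) : mbVal E t M B = 0 := by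
  cases t <;> exact (mbVal.eq_def ..).trans (if_pos h)

theorem mbVal_true_of_not_wins (h : ¬ Wins E M) :
    mbVal E true M B = ⨅ v ∈ unclaimed M B, (1 + mbVal E false (insert v M) B) := by
  rw [mbVal, if_neg (show ¬ ∃ e ∈ E, e ⊆ M from h)]; rfl

theorem mbVal_false_of_not_wins (h : ¬ Wins E M) (hne : (unclaimed M B).Nonempty) :
    mbVal E false M B = ⨆ b ∈ unclaimed M B, mbVal E true M (insert b B) := by
  rw [mbVal, if_neg (show ¬ ∃ e ∈ E, e ⊆ M from h),
    if_neg (show Finset.univ \ (M ∪ B) ≠ ∅ from hne.ne_empty)]; rfl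

theorem mbVal_false_of_unclaimed_eq_empty (h : ¬ Wins E M) (he : unclaimed M B = ∅) :
    mbVal E false M B = ⊤ := by
  rw [mbVal, if_neg (show ¬ ∃ e ∈ E, e ⊆ M from h),
    if_pos (show Finset.univ \ (M ∪ B) = ∅ from he)]

theorem mbVal_true_le (h : ¬ Wins E M) {v : V} (hv : v ∈ unclaimed M B) :
    mbVal E true M B ≤ 1 + mbVal E false (insert v M) B := by
  rw [mbVal_true_of_not_wins h]
  exact iInf₂_le v hv

theorem mbVal_true_insert_le_false (h : ¬ Wins E M) {b : V} (hb : b ∈ unclaimed M B) :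
    mbVal E true M (insert b B) ≤ mbVal E false M B := by
  rw [mbVal_false_of_not_wins h ⟨b, hb⟩]
  exact le_iSup₂ (f := fun b _ => mbVal E true M (insert b B)) b hb

theorem exists_mbVal_true_insert_eq_false (h : ¬ Wins E M) (hne : (unclaimed M B).Nonempty) :
    ∃ b ∈ unclaimed M B, mbVal E true M (insert b B) = mbVal E false M B := by
  obtain ⟨b, hb, hsup⟩ := Finset.exists_mem_eq_sup _ hne fun b => mbVal E true M (insert b B)
  refine ⟨b, hb, ?_⟩
  rw [mbVal_false_of_not_wins h hne, ← Finset.sup_eq_iSup, hsup]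

theorem mbVal_le_mbVal_insert_breaker (t : Bool) (M B : Finset V) {x : V}
    (hx : x ∈ unclaimed M B) : mbVal E t M B ≤ mbVal E t M (insert x B) := by
  by_cases hw : Wins E M
  · simp [mbVal_of_wins t hw]
  cases t
  · rw [mbVal_false_of_not_wins hw ⟨x, hx⟩]
    refine iSup₂_le fun b hb => ?_
    obtain rfl | hbx := eq_or_ne b x
    · obtain he | ⟨b', hb'⟩ := (unclaimed M (insert b B)).eq_empty_or_nonempty
      · simp [mbVal_false_of_unclaimed_eq_empty hw he]
      · exact (mbVal_le_mbVal_insert_breaker true M (insert b B) hb').trans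
          (mbVal_true_insert_le_false hw hb')
    · have hb' : b ∈ unclaimed M (insert x B) := by grind [mem_unclaimed]
      calc mbVal E true M (insert b B)
          ≤ mbVal E true M (insert x (insert b B)) :=
            mbVal_le_mbVal_insert_breaker true M (insert b B) (by grind [mem_unclaimed])
        _ = mbVal E true M (insert b (insert x B)) := by rw [Finset.insert_comm]
        _ ≤ mbVal E false M (insert x B) := mbVal_true_insert_le_false hw hb'
  · rw [mbVal_true_of_not_wins hw (B := insert x B)]
    refine le_iInf₂ fun v hv => (mbVal_true_le hw (v := v) (by grind [mem_unclaimed])).trans ?_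
    gcongr
    exact mbVal_le_mbVal_insert_breaker false (insert v M) B (by grind [mem_unclaimed])
termination_by (unclaimed M B).card
decreasing_by
  all_goals
    simp only [unclaimed_insert_left, unclaimed_insert_right]
    exact Finset.card_erase_lt_of_mem (by grind [mem_unclaimed])

theorem mbVal_true_le_false (M B : Finset V) : mbVal E true M B ≤ mbVal E false M B := by
  by_cases hw : Wins E M
  · simp [mbVal_of_wins true hw]
  obtain he | ⟨b, hb⟩ := (unclaimed M B).eq_empty_or_nonempty
  · simp [mbVal_false_of_unclaimed_eq_empty hw he]
  · exact (mbVal_le_mbVal_insert_breaker true M B hb).trans (mbVal_true_insert_le_false hw hb)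

theorem mbVal_insert_maker_le (t : Bool) (M B : Finset V) {x : V} (hx : x ∈ unclaimed M B) :
    mbVal E t (insert x M) B ≤ mbVal E t M B := by
  by_cases hwx : Wins E (insert x M)
  · simp [mbVal_of_wins t hwx]
  have hw : ¬ Wins E M := fun h => hwx (h.mono (Finset.subset_insert x M))
  cases t
  · obtain he | hne := (unclaimed (insert x M) B).eq_empty_or_nonempty
    · -- Breaker's reply `x` leaves Maker without a move.
      refine le_of_eq_of_le (mbVal_false_of_unclaimed_eq_empty hwx he) ?_
      refine le_of_eq_of_le ?_ (mbVal_true_insert_le_false hw hx)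
      rw [mbVal_true_of_not_wins hw, unclaimed_insert_right, ← unclaimed_insert_left, he]
      simp
    · rw [mbVal_false_of_not_wins hwx hne]
      refine iSup₂_le fun b hb => ?_
      exact (mbVal_insert_maker_le true M (insert b B) (by grind [mem_unclaimed])).trans
        (mbVal_true_insert_le_false hw (by grind [mem_unclaimed]))
  · rw [mbVal_true_of_not_wins hw]
    refine le_iInf₂ fun v hv => ?_
    obtain rfl | hvx := eq_or_ne v x
    · exact (mbVal_true_le_false _ B).trans le_add_self
    calc mbVal E true (insert x M) B
        ≤ 1 + mbVal E false (insert v (insert x M)) B :=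
          mbVal_true_le hwx (by grind [mem_unclaimed])
      _ = 1 + mbVal E false (insert x (insert v M)) B := by rw [Finset.insert_comm]
      _ ≤ 1 + mbVal E false (insert v M) B := by
          gcongr
          exact mbVal_insert_maker_le false (insert v M) B (by grind [mem_unclaimed])
termination_by (unclaimed M B).card
decreasing_by
  all_goals
    simp only [unclaimed_insert_left, unclaimed_insert_right]
    exact Finset.card_erase_lt_of_mem (by grind [mem_unclaimed])

theorem mbVal_le_mbVal_of_wins_imp (t : Bool) (M B : Finset V) (hMB : Disjoint M B)
    (hE : ∀ M', M ⊆ M' → Disjoint M' B → Wins E M' → Wins E' M') :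
    mbVal E' t M B ≤ mbVal E t M B := by
  by_cases hw' : Wins E' M
  · simp [mbVal_of_wins t hw']
  have hw : ¬ Wins E M := fun h => hw' (hE M le_rfl hMB h)
  cases t
  · obtain he | hne := (unclaimed M B).eq_empty_or_nonempty
    · simp [mbVal_false_of_unclaimed_eq_empty hw he]
    · rw [mbVal_false_of_not_wins hw' hne]
      refine iSup₂_le fun b hb => (mbVal_le_mbVal_of_wins_imp true M (insert b B) ?_ ?_).trans
        (mbVal_true_insert_le_false hw hb)
      · exact Finset.disjoint_insert_right.mpr ⟨(mem_unclaimed.mp hb).1, hMB⟩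
      · exact fun M' hM' hM'B => hE M' hM' (Finset.disjoint_of_subset_right
          (Finset.subset_insert b B) hM'B)
  · rw [mbVal_true_of_not_wins hw]
    refine le_iInf₂ fun v hv => (mbVal_true_le hw' hv).trans ?_
    gcongr
    refine mbVal_le_mbVal_of_wins_imp false (insert v M) B ?_ ?_
    · exact Finset.disjoint_insert_left.mpr ⟨(mem_unclaimed.mp hv).2, hMB⟩
    · exact fun M' hM' => hE M' ((Finset.subset_insert v M).trans hM')
termination_by (unclaimed M B).card
decreasing_by
  all_goals
    simp only [unclaimed_insert_left, unclaimed_insert_right]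
    exact Finset.card_erase_lt_of_mem (by grind [mem_unclaimed])

theorem mbVal_insert_maker_eq_insert_breaker {x : V} (hx : ∀ e ∈ E, x ∉ e) (t : Bool)
    (M B : Finset V) : mbVal E t (insert x M) B = mbVal E t M (insert x B) := by
  by_cases hw : Wins E M
  · rw [mbVal_of_wins t hw, mbVal_of_wins t ((wins_insert_iff_of_forall_not_mem hx).mpr hw)]
  have hwx : ¬ Wins E (insert x M) := (wins_insert_iff_of_forall_not_mem hx).not.mpr hw
  have hU : unclaimed (insert x M) B = unclaimed M (insert x B) := by
    rw [unclaimed_insert_left, unclaimed_insert_right]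
  cases t
  · obtain he | hne := (unclaimed (insert x M) B).eq_empty_or_nonempty
    · rw [mbVal_false_of_unclaimed_eq_empty hwx he, mbVal_false_of_unclaimed_eq_empty hw (hU ▸ he)]
    · rw [mbVal_false_of_not_wins hwx hne, mbVal_false_of_not_wins hw (hU ▸ hne), hU]
      refine iSup_congr fun b => iSup_congr fun hb => ?_
      rw [mbVal_insert_maker_eq_insert_breaker hx true M (insert b B), Finset.insert_comm]
  · rw [mbVal_true_of_not_wins hwx, mbVal_true_of_not_wins hw, hU]
    refine iInf_congr fun v => iInf_congr fun hv => ?_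
    rw [Finset.insert_comm, mbVal_insert_maker_eq_insert_breaker hx false (insert v M) B]
termination_by (unclaimed M B).card
decreasing_by
  all_goals
    simp only [unclaimed_insert_left, unclaimed_insert_right]
    exact Finset.card_erase_lt_of_mem (by grind [mem_unclaimed])

theorem mbVal_insert_breaker_of_forall_not_mem {x : V} (hx : ∀ e ∈ E, x ∉ e) (t : Bool)
    {M B : Finset V} (hxf : x ∈ unclaimed M B) : mbVal E t M (insert x B) = mbVal E t M B :=
  le_antisymm ((mbVal_insert_maker_eq_insert_breaker hx t M B).symm.trans_le
    (mbVal_insert_maker_le t M B hxf)) (mbVal_le_mbVal_insert_breaker t M B hxf)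

theorem mbVal_insert_maker_of_forall_not_mem {x : V} (hx : ∀ e ∈ E, x ∉ e) (t : Bool)
    {M B : Finset V} (hxf : x ∈ unclaimed M B) : mbVal E t (insert x M) B = mbVal E t M B := by
  rw [mbVal_insert_maker_eq_insert_breaker hx, mbVal_insert_breaker_of_forall_not_mem hx t hxf]

/-- The inductive step of `min_mbVal_le_mbVal_union`: Breaker answers `v` optimally in the
`F`-game, which leaves Maker no better off in the `G`-game, where `v` is useless. -/
theorem min_mbVal_le_one_add_of_forall_not_mem (F G : Set (Finset V)) {v : V}
    (hv : v ∈ unclaimed M B) (hvG : ∀ e ∈ G, v ∉ e) (hF : ¬ Wins F M)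
    (ih : ∀ b ∈ unclaimed (insert v M) B,
      min (mbVal F true (insert v M) (insert b B)) (mbVal G true (insert v M) (insert b B)) ≤
        mbVal (F ∪ G) true (insert v M) (insert b B)) :
    min (mbVal F true M B) (mbVal G true M B) ≤ 1 + mbVal (F ∪ G) false (insert v M) B := by
  have hG : mbVal G true (insert v M) B = mbVal G true M B :=
    mbVal_insert_maker_of_forall_not_mem hvG true hv
  by_cases hFv : Wins F (insert v M)
  · refine (min_le_left _ _).trans ((mbVal_true_le hF hv).trans ?_)
    simp [mbVal_of_wins false hFv]
  by_cases hGv : Wins G (insert v M)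
  · simp [← hG, mbVal_of_wins true hGv]
  have hFGv : ¬ Wins (F ∪ G) (insert v M) := by rw [wins_union]; tauto
  obtain he | hne := (unclaimed (insert v M) B).eq_empty_or_nonempty
  · simp [mbVal_false_of_unclaimed_eq_empty hFGv he]
  · obtain ⟨b, hb, hbF⟩ := exists_mbVal_true_insert_eq_false hFv hne
    calc min (mbVal F true M B) (mbVal G true M B)
        ≤ min (1 + mbVal F false (insert v M) B) (mbVal G true (insert v M) (insert b B)) :=
          min_le_min (mbVal_true_le hF hv) (hG ▸ mbVal_le_mbVal_insert_breaker true _ B hb)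
      _ ≤ 1 + min (mbVal F true (insert v M) (insert b B))
            (mbVal G true (insert v M) (insert b B)) := by
          rw [← hbF, ← min_add_add_left]
          exact min_le_min le_rfl le_add_self
      _ ≤ 1 + mbVal (F ∪ G) false (insert v M) B := by
          gcongr
          exact (ih b hb).trans (mbVal_true_insert_le_false hFGv hb)

theorem min_mbVal_le_mbVal_union {E₁ E₂ : Set (Finset V)}
    (hdisj : ∀ e₁ ∈ E₁, ∀ e₂ ∈ E₂, Disjoint e₁ e₂) (M B : Finset V) :
    min (mbVal E₁ true M B) (mbVal E₂ true M B) ≤ mbVal (E₁ ∪ E₂) true M B := by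
  by_cases hw₁ : Wins E₁ M
  · simp [mbVal_of_wins true hw₁]
  by_cases hw₂ : Wins E₂ M
  · simp [mbVal_of_wins true hw₂]
  have hw : ¬ Wins (E₁ ∪ E₂) M := by rw [wins_union]; tauto
  rw [mbVal_true_of_not_wins hw]
  refine le_iInf₂ fun v hv => ?_
  have ih : ∀ b ∈ unclaimed (insert v M) B,
      min (mbVal E₁ true (insert v M) (insert b B)) (mbVal E₂ true (insert v M) (insert b B)) ≤
        mbVal (E₁ ∪ E₂) true (insert v M) (insert b B) :=
    fun b hb => min_mbVal_le_mbVal_union hdisj (insert v M) (insert b B)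
  by_cases hv₂ : ∃ e ∈ E₂, v ∈ e
  · obtain ⟨e₂, he₂, hve₂⟩ := hv₂
    have hv₁ : ∀ e ∈ E₁, v ∉ e := fun e₁ he₁ hve₁ =>
      Finset.disjoint_left.mp (hdisj e₁ he₁ e₂ he₂) hve₁ hve₂
    rw [min_comm, Set.union_comm]
    refine min_mbVal_le_one_add_of_forall_not_mem E₂ E₁ hv hv₁ hw₂ fun b hb => ?_
    rw [min_comm, Set.union_comm]
    exact ih b hb
  · exact min_mbVal_le_one_add_of_forall_not_mem E₁ E₂ hv (fun e he hve => hv₂ ⟨e, he, hve⟩)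
      hw₁ ih
termination_by (unclaimed M B).card
decreasing_by
  simp only [unclaimed_insert_left, unclaimed_insert_right]
  exact (Finset.card_erase_le).trans_lt (Finset.card_erase_lt_of_mem (by grind [mem_unclaimed]))

/-- Breaker's stone on `p` splits the game into two independent games: on `A`, where Breaker
may as well hold `d` instead, and off `A`, where Maker's stone on `s` is useless. -/
theorem min_mbVal_le_mbVal_of_separates {A : Set V} {s p d : V} (hs : s ∈ A) (hd : d ∉ A)
    (hps : p ≠ s) (hsep : ∀ e ∈ E, p ∉ e → ↑e ⊆ A ∨ Disjoint (↑e) A) :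
    min (mbVal E true {s} {d}) (mbVal E true ∅ ∅) ≤ mbVal E true {s} {p} := by
  set E₁ := {e ∈ E | p ∉ e ∧ ↑e ⊆ A}
  set E₂ := {e ∈ E | p ∉ e ∧ Disjoint (↑e) A}
  have hdisj : ∀ e₁ ∈ E₁, ∀ e₂ ∈ E₂, Disjoint e₁ e₂ := fun e₁ he₁ e₂ he₂ =>
    Finset.disjoint_left.mpr fun x hx₁ hx₂ => Set.disjoint_left.mp he₂.2.2 hx₂ (he₁.2.2 hx₁)
  have hp : ∀ e ∈ E₁ ∪ E₂, p ∉ e := by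
    rintro e (he | he)
    exacts [he.2.1, he.2.1]
  have hE : ∀ M', {s} ⊆ M' → Disjoint M' {p} → Wins E M' → Wins (E₁ ∪ E₂) M' := by
    rintro M' - hM'p ⟨e, he, heM'⟩
    have hpe : p ∉ e := fun hpe => Finset.disjoint_singleton_right.mp hM'p (heM' hpe)
    refine ⟨e, ?_, heM'⟩
    rcases hsep e he hpe with h | h
    exacts [Or.inl ⟨he, hpe, h⟩, Or.inr ⟨he, hpe, h⟩]
  have hsd : s ≠ d := fun h => hd (h ▸ hs)
  calc min (mbVal E true {s} {d}) (mbVal E true ∅ ∅)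
      ≤ min (mbVal E₁ true {s} {d}) (mbVal E₂ true ∅ ∅) := by
        gcongr <;> exact mbVal_le_mbVal_of_wins_imp true _ _ (by simp [hsd])
          fun _ _ _ h => h.imp fun _ he => ⟨he.1.1, he.2⟩
    _ = min (mbVal E₁ true {s} ∅) (mbVal E₂ true {s} ∅) := by
        have hE₁ : mbVal E₁ true {s} (insert d ∅) = mbVal E₁ true {s} ∅ :=
          mbVal_insert_breaker_of_forall_not_mem (fun e he hde => hd (he.2.2 hde)) true
            (by simp [Ne.symm hsd])
        have hE₂ : mbVal E₂ true (insert s ∅) ∅ = mbVal E₂ true ∅ ∅ :=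
          mbVal_insert_maker_of_forall_not_mem
            (fun e he hse => Set.disjoint_left.mp he.2.2 hse hs) true (by simp)
        rw [insert_empty_eq] at hE₁ hE₂
        rw [hE₁, hE₂]
    _ ≤ mbVal (E₁ ∪ E₂) true {s} ∅ := min_mbVal_le_mbVal_union hdisj _ _
    _ = mbVal (E₁ ∪ E₂) true {s} {p} :=
        (mbVal_insert_breaker_of_forall_not_mem hp true (by simp [hps])).symm
    _ ≤ mbVal E true {s} {p} :=
        mbVal_le_mbVal_of_wins_imp true _ _ (by simp [Ne.symm hps]) hE

end MakerBreaker

namespace SimpleGraph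

variable {V : Type} {G : SimpleGraph V}

def reachableAvoiding (G : SimpleGraph V) (p s : V) : Set V :=
  {v | ∃ w : G.Walk s v, p ∉ w.support}

theorem start_mem_reachableAvoiding {p s : V} (h : p ≠ s) : s ∈ G.reachableAvoiding p s :=
  ⟨.nil, by simpa using h⟩

theorem mem_reachableAvoiding_of_adj {p s u x : V} (hu : u ∈ G.reachableAvoiding p s)
    (hux : G.Adj u x) (hx : x ≠ p) : x ∈ G.reachableAvoiding p s := by
  obtain ⟨w, hw⟩ := hu
  exact ⟨w.concat hux, by simp [Walk.support_concat, hw, Ne.symm hx]⟩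

theorem IsAcyclic.exists_adj_forall_mem_support (hG : G.IsAcyclic) {s d : V}
    (hr : G.Reachable s d) (hsd : s ≠ d) : ∃ p, G.Adj s p ∧ ∀ w : G.Walk s d, p ∈ w.support := by
  obtain ⟨q⟩ := hr
  refine ⟨q.toPath.1.snd, q.toPath.1.adj_snd (Walk.not_nil_of_ne hsd), fun w => ?_⟩
  apply w.support_toPath_subset_support
  rw [(hG.subsingleton_path s d).elim w.toPath q.toPath]
  exact q.toPath.1.getVert_mem_support 1

end SimpleGraph

theorem mem_closedNbhdFinset {V : Type} [Fintype V] {G : SimpleGraph V} {u x : V} :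
    x ∈ closedNbhdFinset G u ↔ x = u ∨ G.Adj u x := by
  simp [closedNbhdFinset]

theorem closedNbhdFinset_subset_or_disjoint_reachableAvoiding {V : Type} [Fintype V]
    {G : SimpleGraph V} {p s u : V} (hpu : p ∉ closedNbhdFinset G u) :
    ↑(closedNbhdFinset G u) ⊆ G.reachableAvoiding p s ∨
      Disjoint (↑(closedNbhdFinset G u)) (G.reachableAvoiding p s) := by
  rw [mem_closedNbhdFinset, not_or] at hpu
  by_cases hu : u ∈ G.reachableAvoiding p s
  · refine Or.inl fun x hx => ?_
    rcases mem_closedNbhdFinset.mp hx with rfl | hux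
    exacts [hu, G.mem_reachableAvoiding_of_adj hu hux fun h => hpu.2 (h ▸ hux)]
  · refine Or.inr (Set.disjoint_left.mpr fun x hx hxA => ?_)
    rcases mem_closedNbhdFinset.mp hx with rfl | hux
    exacts [hu hxA, hu (G.mem_reachableAvoiding_of_adj hxA hux.symm (Ne.symm hpu.1))]

theorem stmt_6_general {V : Type} [Fintype V] (T : SimpleGraph V) (hT : T.IsTree)
    (h2 : 2 ≤ gammaSMB' T) (s₁ : V)
    (hopt : 1 + mbVal (nbhdHyp T) false {s₁} ∅ = gammaSMB' T) :
    ∃ d₁' : V, T.Adj s₁ d₁' ∧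
      mbVal (nbhdHyp T) true {s₁} {d₁'} = mbVal (nbhdHyp T) false {s₁} ∅ := by
  set E := nbhdHyp T
  have hγ : gammaSMB' T = mbVal E true ∅ ∅ := rfl
  have hwin : ¬ MakerBreaker.Wins E {s₁} := fun h => by
    rw [MakerBreaker.mbVal_of_wins false h, add_zero] at hopt
    rw [← hopt] at h2
    exact absurd h2 (by norm_num)
  have hne : (MakerBreaker.unclaimed {s₁} ∅).Nonempty := by
    by_contra h
    refine hwin ⟨closedNbhdFinset T s₁, ⟨s₁, rfl⟩, fun v _ => ?_⟩
    by_contra hv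
    exact h ⟨v, by simpa using hv⟩
  obtain ⟨d, hd, hdX⟩ := MakerBreaker.exists_mbVal_true_insert_eq_false hwin hne
  have hsd : s₁ ≠ d := by simpa [eq_comm] using hd
  obtain ⟨p, hsp, hp⟩ :=
    hT.isAcyclic.exists_adj_forall_mem_support (hT.connected.preconnected s₁ d) hsd
  refine ⟨p, hsp, le_antisymm
    (MakerBreaker.mbVal_true_insert_le_false hwin (by simp [hsp.ne'])) ?_⟩
  calc mbVal E false {s₁} ∅ = min (mbVal E true {s₁} {d}) (mbVal E true ∅ ∅) := by
        rw [insert_empty_eq] at hdX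
        rw [hdX, ← hγ, ← hopt, min_eq_left le_add_self]
    _ ≤ mbVal E true {s₁} {p} :=
        MakerBreaker.min_mbVal_le_mbVal_of_separates
          (SimpleGraph.start_mem_reachableAvoiding hsp.ne') (fun ⟨w, hw⟩ => hw (hp w)) hsp.ne'
          fun _ ⟨_, he⟩ hpe => he ▸ closedNbhdFinset_subset_or_disjoint_reachableAvoiding (he ▸ hpe)

/-- Let `T` be a tree with no perfect matching on which Staller wins the
Staller-start Maker–Breaker domination game but needs at least two moves
(`2 ≤ γ'_SMB(T) < ∞`).  If `s₁` is an optimal first move of Staller, then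
Dominator has an optimal response `d₁'` adjacent to `s₁` in `T`. -/
theorem stmt_6 {V : Type} [Fintype V] (T : SimpleGraph V) (hT : T.IsTree)
    (hpm : ¬ ∃ M : T.Subgraph, M.IsPerfectMatching)
    (h2 : 2 ≤ gammaSMB' T) (hfin : gammaSMB' T < ⊤) (s₁ : V)
    (hopt : 1 + mbVal (nbhdHyp T) false {s₁} ∅ = gammaSMB' T) :
    ∃ d₁' : V, T.Adj s₁ d₁' ∧
      mbVal (nbhdHyp T) true {s₁} {d₁'} = mbVal (nbhdHyp T) false {s₁} ∅ :=
  stmt_6_general T hT h2 s₁ hopt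
end

section
/- If a graph G contains a substructure S belonging to the family S_k, then Staller can win the Staller-start Maker-Breaker domination game on G in at most k moves, i.e., γ'_SMB(G) ≤ k. -/
open scoped Classical


open scoped Classical

/-!
Induct along the construction of `S`, keeping the invariant that no vertex of `S` is claimed
and every neighbour of a distinguished vertex lies in `S` or is already Staller's. Staller
first claims the origin `z`. Since `S - z` is the disjoint union of `S¹` and `S²` with no
edges between them, each of `S¹`, `S²` satisfies the invariant once `z` is hers.
Breaker's answer lies in at most one of them, and Staller continues in the other, which is a
member of some `S_i^*` with `i ≤ k - 1`. On a single distinguished vertex `x`, claiming `x`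
gives Staller the whole closed neighbourhood `N[x]`.
-/

section MakerBreaker

variable {V : Type} [Fintype V] (E : Set (Finset V))

lemma mbVal_true_le_of_notMem {M B : Finset V} {v : V} (hv : v ∉ M ∪ B) :
    mbVal E true M B ≤ 1 + mbVal E false (insert v M) B := by
  rw [mbVal]
  split_ifs
  · exact zero_le
  · exact iInf₂_le v (by simpa using hv)

lemma mbVal_false_eq_zero {M B : Finset V} (h : ∃ e ∈ E, e ⊆ M) :
    mbVal E false M B = 0 := by
  rw [mbVal, if_pos h]

lemma mbVal_false_le {M B : Finset V} {n : ℕ∞} (hfree : ∃ v, v ∉ M ∪ B)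
    (h : ∀ b ∉ M ∪ B, mbVal E true M (insert b B) ≤ n) :
    mbVal E false M B ≤ n := by
  rw [mbVal]
  split_ifs with _ hfull
  · exact zero_le
  · obtain ⟨v, hv⟩ := hfree
    simpa [hv] using Finset.ext_iff.mp hfull v
  · exact iSup₂_le fun b hb => h b (by simpa using hb)

end MakerBreaker

lemma closedNbhdFinset_subset {V : Type} [Fintype V] {G : SimpleGraph V} {x : V}
    {M : Finset V} (hx : x ∈ M) (hN : G.neighborSet x ⊆ M) :
    closedNbhdFinset G x ⊆ M := by
  intro w hw
  rcases (Finset.mem_filter.mp hw).2 with rfl | hadj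
  · exact hx
  · exact hN hadj

lemma mbVal_nbhdHyp_le_one {V : Type} [Fintype V] {G : SimpleGraph V} {x : V}
    {M B : Finset V} (hx : x ∉ M ∪ B) (hnb : G.neighborSet x ⊆ {x} ∪ ↑M) :
    mbVal (nbhdHyp G) true M B ≤ 1 := by
  refine (mbVal_true_le_of_notMem _ hx).trans ?_
  have hN : G.neighborSet x ⊆ ↑(insert x M) := fun w hw => by
    rcases hnb hw with rfl | hwM
    · exact (G.irrefl hw).elim
    · exact Finset.mem_coe.mpr (Finset.mem_insert_of_mem hwM)
  have hwin : ∃ e ∈ nbhdHyp G, e ⊆ insert x M :=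
    ⟨closedNbhdFinset G x, ⟨x, rfl⟩, closedNbhdFinset_subset (Finset.mem_insert_self x M) hN⟩
  rw [mbVal_false_eq_zero _ hwin, add_zero]

section Split

variable {V : Type} [DecidableEq V] {G : SimpleGraph V} {VS X C D : Set V} {z : V}

lemma neighborSet_subset_of_split {M : Finset V} (hCD : C ∪ D = VS \ {z})
    (hnoedge : ∀ c ∈ C, ∀ d ∈ D, ¬ G.Adj c d)
    (hnb : ∀ x ∈ X, G.neighborSet x ⊆ VS ∪ ↑M) :
    ∀ x ∈ X ∩ C, G.neighborSet x ⊆ C ∪ ↑(insert z M) := by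
  rintro x ⟨hxX, hxC⟩ w hadj
  rcases hnb x hxX hadj with hwVS | hwM
  · by_cases hwz : w = z
    · simp [hwz]
    · have hwCD : w ∈ C ∪ D := by rw [hCD]; exact ⟨hwVS, hwz⟩
      exact hwCD.elim Or.inl fun hwD => absurd hadj (hnoedge x hxC w hwD)
  · simp [Finset.mem_coe.mp hwM]

lemma notMem_of_split {M B : Finset V} {b : V} (hC : C ⊆ VS \ {z}) (hb : b ∉ C)
    (hfree : ∀ v ∈ VS, v ∉ M ∪ B) :
    ∀ v ∈ C, v ∉ insert z M ∪ insert b B := by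
  intro v hv
  obtain ⟨hvVS, hvz⟩ := hC hv
  have hvb : v ≠ b := fun h => hb (h ▸ hv)
  simpa [show v ≠ z from hvz, hvb] using hfree v hvVS

end Split

theorem mbVal_nbhdHyp_le_of_sStar {V : Type} [Fintype V] (G : SimpleGraph V) (k : ℕ)
    {VS X : Set V} {M B : Finset V} (hS : SStar k G VS X)
    (hnb : ∀ x ∈ X, G.neighborSet x ⊆ VS ∪ ↑M) (hfree : ∀ v ∈ VS, v ∉ M ∪ B) :
    mbVal (nbhdHyp G) true M B ≤ k := by
  induction k using Nat.strong_induction_on generalizing VS X M B with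
  | _ k IH =>
  match k, hS with
  | 0, hS =>
    rw [SStar] at hS
    exact hS.elim
  | 1, hS =>
    rw [SStar] at hS
    obtain ⟨x, rfl, rfl⟩ := hS
    exact mbVal_nbhdHyp_le_one (hfree x rfl) (hnb x rfl)
  | k + 2, hS =>
    rw [SStar] at hS
    obtain ⟨z, A, C, x₁, -, hzVS, -, -, hAC, hdisj, hx₁, -, -, hnoedge, hSA, i, ⟨-, hik⟩,
      hSC⟩ := hS
    have hA : A ⊆ VS \ {z} := hAC ▸ Set.subset_union_left
    have hC : C ⊆ VS \ {z} := hAC ▸ Set.subset_union_right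
    have hCA : C ∪ A = VS \ {z} := Set.union_comm C A ▸ hAC
    have hBreaker : mbVal (nbhdHyp G) false (insert z M) B ≤ (k + 1 : ℕ) := by
      refine mbVal_false_le _ ⟨x₁, ?_⟩ fun b _ => ?_
      · obtain ⟨hx₁VS, hx₁z⟩ := hA hx₁.1
        simpa [show x₁ ≠ z from hx₁z] using hfree x₁ hx₁VS
      by_cases hbA : b ∈ A
      · -- Breaker answered in `S¹`: Staller continues in `S²`.
        refine (IH i (by omega) hSC (neighborSet_subset_of_split hCA
          (fun c hc a ha hadj => hnoedge a ha c hc hadj.symm) hnb)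
          (notMem_of_split hC (Set.disjoint_left.mp hdisj hbA) hfree)).trans ?_
        exact_mod_cast hik
      · exact IH (k + 1) (by omega) hSA (neighborSet_subset_of_split hAC hnoedge hnb)
          (notMem_of_split hA hbA hfree)
    calc mbVal (nbhdHyp G) true M B
        ≤ 1 + mbVal (nbhdHyp G) false (insert z M) B :=
          mbVal_true_le_of_notMem _ (hfree z hzVS)
      _ ≤ 1 + (k + 1 : ℕ) := add_le_add_right hBreaker 1
      _ = (k + 2 : ℕ) := by push_cast; ring

theorem stmt_8_general {V : Type} [Fintype V] (G : SimpleGraph V) (k : ℕ)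
    (h : HasSubstructure k G) :
    gammaSMB' G ≤ (k : ℕ∞) := by
  obtain ⟨VS, X, ⟨hS, -⟩, hdeg⟩ := h
  exact mbVal_nbhdHyp_le_of_sStar G k hS (fun x hx w hw => Or.inl (hdeg x hx w hw))
    (fun v _ => Finset.notMem_empty v)

/-- If a graph `G` contains a substructure from the family `S_k`, then Staller
wins the Staller-start Maker–Breaker domination game on `G` in at most `k` moves:
`γ'_SMB(G) ≤ k`. -/
theorem stmt_8 {V : Type} [Fintype V] (G : SimpleGraph V) (k : ℕ) (hk : 1 ≤ k)
    (h : HasSubstructure k G) :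
    gammaSMB' G ≤ (k : ℕ∞) :=
  stmt_8_general G k h
end

section
/- Consider a Maker-Breaker domination game on a graph G, and let X and Y be the sets of vertices already played by Dominator and Staller, respectively. If there exists a matching M in G − (X ∪ Y) such that every vertex of G not covered by M lies in N_G[X], then Dominator has a winning strategy in the continuation of the game, regardless of which player moves next. -/
open scoped Classical

open scoped Classical

section PairingAux

variable {V : Type} [Fintype V]

/-- Pairing invariant for Breaker: `Mk` and `B` are Maker's and Breaker's claimed
vertices, `S` is a set of free vertices paired up by the involution `f`, and every
hyperedge either already contains a Breaker vertex or contains a full pair. -/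
def PairInv (E : Set (Finset V)) (Mk B S : Finset V) (f : V → V) : Prop :=
  Disjoint Mk B ∧
  (∀ v ∈ S, v ∉ Mk ∧ v ∉ B) ∧
  (∀ v ∈ S, f v ∈ S ∧ f v ≠ v ∧ f (f v) = v) ∧
  (∀ e ∈ E, (∃ b ∈ B, b ∈ e) ∨ ∃ v ∈ S, v ∈ e ∧ f v ∈ e)

variable {E : Set (Finset V)} {Mk B S : Finset V} {f : V → V}

lemma PairInv.not_sub (h : PairInv E Mk B S f) : ¬ ∃ e ∈ E, e ⊆ Mk := by
  rintro ⟨e, he, hsub⟩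
  rcases h.2.2.2 e he with ⟨b, hb, hbe⟩ | ⟨v, hv, hve, -⟩
  · exact (Finset.disjoint_right.1 h.1 hb) (hsub hbe)
  · exact (h.2.1 v hv).1 (hsub hve)

lemma PairInv.breakerStep (h : PairInv E Mk B S f) {w : V} (hw1 : w ∉ Mk) (hw2 : w ∉ B) :
    PairInv E Mk (insert w B) (if w ∈ S then S \ {w, f w} else S) f := by
  obtain ⟨hd, hfr, hinv, hedge⟩ := h
  by_cases hwS : w ∈ S
  · rw [if_pos hwS]
    refine ⟨Finset.disjoint_insert_right.2 ⟨hw1, hd⟩, ?_, ?_, ?_⟩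
    · intro v hv
      rw [Finset.mem_sdiff] at hv
      refine ⟨(hfr v hv.1).1, ?_⟩
      rw [Finset.mem_insert]
      rintro (rfl | hvB)
      · exact hv.2 (Finset.mem_insert_self _ _)
      · exact (hfr v hv.1).2 hvB
    · intro v hv
      rw [Finset.mem_sdiff, Finset.mem_insert, Finset.mem_singleton] at hv
      push_neg at hv
      obtain ⟨hvS, hvw, hvfw⟩ := hv
      obtain ⟨h1, h2, h3⟩ := hinv v hvS
      refine ⟨?_, h2, h3⟩
      rw [Finset.mem_sdiff, Finset.mem_insert, Finset.mem_singleton]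
      push_neg
      refine ⟨h1, ?_, ?_⟩
      · rintro rfl
        exact hvfw h3.symm
      · intro hfvfw
        apply hvw
        rw [← h3, hfvfw, (hinv w hwS).2.2]
    · intro e he
      rcases hedge e he with ⟨b, hb, hbe⟩ | ⟨v, hvS, hve, hfve⟩
      · exact Or.inl ⟨b, Finset.mem_insert_of_mem hb, hbe⟩
      · by_cases hvw : v = w
        · exact Or.inl ⟨w, Finset.mem_insert_self _ _, hvw ▸ hve⟩
        · by_cases hvfw : v = f w
          · refine Or.inl ⟨w, Finset.mem_insert_self _ _, ?_⟩
            have hfv : f v = w := by rw [hvfw, (hinv w hwS).2.2]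
            exact hfv ▸ hfve
          · refine Or.inr ⟨v, ?_, hve, hfve⟩
            rw [Finset.mem_sdiff, Finset.mem_insert, Finset.mem_singleton]
            push_neg
            exact ⟨hvS, hvw, hvfw⟩
  · rw [if_neg hwS]
    refine ⟨Finset.disjoint_insert_right.2 ⟨hw1, hd⟩, ?_, hinv, ?_⟩
    · intro v hv
      refine ⟨(hfr v hv).1, ?_⟩
      rw [Finset.mem_insert]
      rintro (rfl | hvB)
      · exact hwS hv
      · exact (hfr v hv).2 hvB
    · intro e he
      rcases hedge e he with ⟨b, hb, hbe⟩ | hp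
      · exact Or.inl ⟨b, Finset.mem_insert_of_mem hb, hbe⟩
      · exact Or.inr hp

lemma PairInv.makerStep (h : PairInv E Mk B S f) {v : V} (hv1 : v ∉ B) (hv2 : v ∉ S) :
    PairInv E (insert v Mk) B S f := by
  obtain ⟨hd, hfr, hinv, hedge⟩ := h
  refine ⟨Finset.disjoint_insert_left.2 ⟨hv1, hd⟩, ?_, hinv, hedge⟩
  intro u hu
  refine ⟨?_, (hfr u hu).2⟩
  rw [Finset.mem_insert]
  rintro (rfl | hMk)
  · exact hv2 hu
  · exact (hfr u hu).1 hMk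

lemma free_card_lt_left {Mk B : Finset V} {v : V} (hv1 : v ∉ Mk) (hv2 : v ∉ B) :
    (Finset.univ \ (insert v Mk ∪ B)).card < (Finset.univ \ (Mk ∪ B)).card := by
  apply Finset.card_lt_card
  rw [Finset.ssubset_iff_of_subset]
  · exact ⟨v, by simp [hv1, hv2], by simp⟩
  · intro x hx
    simp only [Finset.mem_sdiff, Finset.mem_univ, true_and, Finset.mem_union,
      Finset.mem_insert] at hx ⊢
    tauto

lemma free_card_lt_right {Mk B : Finset V} {v : V} (hv1 : v ∉ Mk) (hv2 : v ∉ B) :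
    (Finset.univ \ (Mk ∪ insert v B)).card < (Finset.univ \ (Mk ∪ B)).card := by
  apply Finset.card_lt_card
  rw [Finset.ssubset_iff_of_subset]
  · exact ⟨v, by simp [hv1, hv2], by simp⟩
  · intro x hx
    simp only [Finset.mem_sdiff, Finset.mem_univ, true_and, Finset.mem_union,
      Finset.mem_insert] at hx ⊢
    tauto

lemma pairing_win (E : Set (Finset V)) :
    ∀ n : ℕ, ∀ Mk B S : Finset V, ∀ f : V → V,
      (Finset.univ \ (Mk ∪ B)).card ≤ n → PairInv E Mk B S f →
      mbVal E true Mk B = ⊤ ∧ mbVal E false Mk B = ⊤ := by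
  intro n
  induction n using Nat.strong_induction_on with
  | _ n ih =>
    intro Mk B S f hcard hInv
    have hns : ¬ ∃ e ∈ E, e ⊆ Mk := hInv.not_sub
    have claim : ∀ v : V, v ∉ Mk → v ∉ B → mbVal E false (insert v Mk) B = ⊤ := by
      intro v hvM hvB
      rw [mbVal]
      have hns' : ¬ ∃ e ∈ E, e ⊆ insert v Mk := by
        rintro ⟨e, he, hsub⟩
        rcases hInv.2.2.2 e he with ⟨b, hb, hbe⟩ | ⟨u, huS, hue, hfue⟩
        · rcases Finset.mem_insert.1 (hsub hbe) with rfl | hbM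
          · exact hvB hb
          · exact (Finset.disjoint_right.1 hInv.1 hb) hbM
        · obtain ⟨hfuS, hfune, -⟩ := hInv.2.2.1 u huS
          rcases Finset.mem_insert.1 (hsub hue) with rfl | h1
          · rcases Finset.mem_insert.1 (hsub hfue) with h2 | h2
            · exact hfune h2
            · exact (hInv.2.1 _ hfuS).1 h2
          · exact (hInv.2.1 _ huS).1 h1
      rw [if_neg hns']
      by_cases hemp : Finset.univ \ (insert v Mk ∪ B) = ∅
      · rw [if_pos hemp]
      · rw [if_neg hemp]
        obtain ⟨w, hwv, hwM, hwB, hwfv⟩ :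
            ∃ w : V, w ≠ v ∧ w ∉ Mk ∧ w ∉ B ∧ (v ∈ S → w = f v) := by
          by_cases hvS : v ∈ S
          · obtain ⟨hfvS, hfvne, -⟩ := hInv.2.2.1 v hvS
            exact ⟨f v, hfvne, (hInv.2.1 _ hfvS).1, (hInv.2.1 _ hfvS).2, fun _ => rfl⟩
          · obtain ⟨w, hw⟩ := Finset.nonempty_iff_ne_empty.2 hemp
            simp only [Finset.mem_sdiff, Finset.mem_univ, true_and, Finset.mem_union,
              Finset.mem_insert, not_or] at hw
            exact ⟨w, hw.1.1, hw.1.2, hw.2, fun h => absurd h hvS⟩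
        have hbstep := hInv.breakerStep hwM hwB
        have hvnotS' : v ∉ (if w ∈ S then S \ {w, f w} else S) := by
          by_cases hvS : v ∈ S
          · have hwfveq : w = f v := hwfv hvS
            have hwS' : w ∈ S := hwfveq ▸ (hInv.2.2.1 v hvS).1
            rw [if_pos hwS']
            intro hcon
            rw [Finset.mem_sdiff, Finset.mem_insert, Finset.mem_singleton] at hcon
            apply hcon.2
            right
            rw [hwfveq, (hInv.2.2.1 v hvS).2.2]
          · intro hcon
            apply hvS
            revert hcon
            split
            · intro hcon; exact (Finset.mem_sdiff.1 hcon).1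
            · intro hcon; exact hcon
        have hvB' : v ∉ insert w B := by
          rw [Finset.mem_insert]
          rintro (rfl | h)
          · exact hwv rfl
          · exact hvB h
        have hmstep := hbstep.makerStep hvB' hvnotS'
        have hwM' : w ∉ insert v Mk := by
          rw [Finset.mem_insert]
          rintro (rfl | h)
          · exact hwv rfl
          · exact hwM h
        have hlt : (Finset.univ \ (insert v Mk ∪ insert w B)).card < n :=
          lt_of_lt_of_le ((free_card_lt_right hwM' hwB).trans
            (free_card_lt_left hvM hvB)) hcard
        have hval := (ih _ hlt (insert v Mk) (insert w B) _ f le_rfl hmstep).1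
        apply top_unique
        refine le_iSup₂_of_le w ?_ (le_of_eq hval.symm)
        simp only [Finset.mem_sdiff, Finset.mem_univ, true_and, Finset.mem_union,
          Finset.mem_insert, not_or]
        exact ⟨⟨hwv, hwM⟩, hwB⟩
    constructor
    · rw [mbVal, if_neg hns]
      simp only [iInf_eq_top]
      intro v hv
      simp only [Finset.mem_sdiff, Finset.mem_univ, true_and, Finset.mem_union,
        not_or] at hv
      rw [claim v hv.1 hv.2]
      simp
    · rw [mbVal, if_neg hns]
      by_cases hemp : Finset.univ \ (Mk ∪ B) = ∅
      · rw [if_pos hemp]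
      · rw [if_neg hemp]
        obtain ⟨w, hw⟩ := Finset.nonempty_iff_ne_empty.2 hemp
        have hw' := hw
        simp only [Finset.mem_sdiff, Finset.mem_univ, true_and, Finset.mem_union,
          not_or] at hw'
        have hbstep := hInv.breakerStep hw'.1 hw'.2
        have hlt : (Finset.univ \ (Mk ∪ insert w B)).card < n :=
          lt_of_lt_of_le (free_card_lt_right hw'.1 hw'.2) hcard
        have hval := (ih _ hlt Mk (insert w B) _ f le_rfl hbstep).1
        exact top_unique (le_iSup₂_of_le w hw (le_of_eq hval.symm))

end PairingAux


/-- Pairing lemma: in a Maker–Breaker domination game on `G` in which Dominator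
(Breaker) has already claimed `X` and Staller (Maker) has claimed `Y`, if there
is a matching `M` of `G - (X ∪ Y)` such that every vertex not covered by `M`
lies in `N_G[X]`, then Dominator wins the continuation of the game no matter
which player moves next. -/
theorem stmt_14 {V : Type} [Fintype V] (G : SimpleGraph V) (X Y : Finset V)
    (hXY : Disjoint X Y) (M : G.Subgraph) (hM : M.IsMatching)
    (hMav : ∀ v ∈ M.verts, v ∉ X ∧ v ∉ Y)
    (hcov : ∀ v : V, v ∉ M.verts → ∃ x ∈ X, v = x ∨ G.Adj x v) :
    mbVal (nbhdHyp G) true Y X = ⊤ ∧ mbVal (nbhdHyp G) false Y X = ⊤ := by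
  classical
  obtain ⟨f, hadj⟩ : ∃ f : V → V, ∀ v, ∀ _ : v ∈ M.verts, M.Adj v (f v) :=
    ⟨fun v => if h : v ∈ M.verts then (hM h).choose else v,
     fun v h => by dsimp only; rw [dif_pos h]; exact (hM h).choose_spec.1⟩
  have hfmem : ∀ v, ∀ h : v ∈ M.verts, f v ∈ M.verts := fun v h => (hadj v h).snd_mem
  have hff : ∀ v, ∀ h : v ∈ M.verts, f (f v) = v := fun v h =>
    (hM (hfmem v h)).unique (hadj _ (hfmem v h)) ((hadj v h).symm)
  have hne : ∀ v, ∀ h : v ∈ M.verts, f v ≠ v := fun v h e =>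
    (M.adj_sub (hadj v h)).ne e.symm
  set S : Finset V := Finset.univ.filter (fun v => v ∈ M.verts) with hSdef
  have hmemS : ∀ v, v ∈ S ↔ v ∈ M.verts := by
    intro v; simp [hSdef]
  have hInv : PairInv (nbhdHyp G) Y X S f := by
    refine ⟨hXY.symm, ?_, ?_, ?_⟩
    · intro v hv
      exact ⟨(hMav v ((hmemS v).1 hv)).2, (hMav v ((hmemS v).1 hv)).1⟩
    · intro v hv
      have h := (hmemS v).1 hv
      exact ⟨(hmemS _).2 (hfmem v h), hne v h, hff v h⟩
    · intro e he
      rw [nbhdHyp, Set.mem_range] at he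
      obtain ⟨v, rfl⟩ := he
      by_cases h : v ∈ M.verts
      · refine Or.inr ⟨v, (hmemS v).2 h, ?_, ?_⟩
        · simp [closedNbhdFinset]
        · simp only [closedNbhdFinset, Finset.mem_filter, Finset.mem_univ, true_and]
          exact Or.inr (M.adj_sub (hadj v h))
      · obtain ⟨x, hx, hxv⟩ := hcov v h
        refine Or.inl ⟨x, hx, ?_⟩
        simp only [closedNbhdFinset, Finset.mem_filter, Finset.mem_univ, true_and]
        rcases hxv with h1 | h1
        · exact Or.inl h1.symm
        · exact Or.inr h1.symm
  exact pairing_win (nbhdHyp G) _ Y X S f le_rfl hInv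
end
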